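/- arXiv:2510.24544 — 15 statements merged into one kernel-verified Lean document; each statement's English description precedes it below -/
import Mathlib

section
/- Let H be a real Hilbert space, α ∈ (0, 1/2), T : H → H an α-averaged nonexpansive operator, and x̂ ∈ Fix(T). For any x ∈ H with Tx ≠ x, define θ* := −⟨Tx − x, Tx − x̂⟩ / ‖Tx − x‖². Then θ* > 0, and for every θ ∈ (0, 2θ*) one has ‖T^θ x − x̂‖ < ‖Tx − x̂‖. -/
open RealInnerProductSpace

/-- `T` is nonexpansive: `‖T x − T y‖ ≤ ‖x − y‖` for all `x, y`. -/
def Nonexpansive {H : Type*} [NormedAddCommGroup H] [InnerProductSpace ℝ H]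
    (T : H → H) : Prop :=
  ∀ x y, ‖T x - T y‖ ≤ ‖x - y‖

/-- `T` is `α`-averaged nonexpansive: `T = (1−α)I + αN` for a nonexpansive `N`. -/
def AveragedNE {H : Type*} [NormedAddCommGroup H] [InnerProductSpace ℝ H]
    (α : ℝ) (T : H → H) : Prop :=
  ∃ N : H → H, Nonexpansive N ∧ ∀ x, T x = (1 - α) • x + α • N x

theorem stmt_0 {H : Type*} [NormedAddCommGroup H] [InnerProductSpace ℝ H]
    [CompleteSpace H]
    (α : ℝ) (hα : α ∈ Set.Ioo (0 : ℝ) (1/2))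
    (T : H → H) (hT : AveragedNE α T)
    (xhat : H) (hxhat : T xhat = xhat)
    (x : H) (hx : T x ≠ x)
    (θs : ℝ) (hθs : θs = -⟪T x - x, T x - xhat⟫ / ‖T x - x‖ ^ 2) :
    0 < θs ∧ ∀ θ ∈ Set.Ioo (0 : ℝ) (2 * θs),
      ‖(T x + θ • (T x - x)) - xhat‖ < ‖T x - xhat‖ := by
  obtain ⟨hα0, hα2⟩ := hα
  obtain ⟨N, hN, hTN⟩ := hT
  have hNfix : N xhat = xhat := by
    have h1 := hTN xhat
    rw [hxhat] at h1
    have h2 : α • N xhat = α • xhat := by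
      linear_combination (norm := module) -h1
    exact smul_right_injective H hα0.ne' h2
  set u := x - xhat with hu
  set v := N x - xhat with hvdef
  have hd : T x - x = α • (v - u) := by
    rw [hTN x, hvdef, hu]; module
  have hTxh : T x - xhat = (1 - α) • u + α • v := by
    rw [hTN x, hvdef, hu]; module
  have hv : ‖v‖ ≤ ‖u‖ := by
    have := hN x xhat
    rw [hNfix] at this
    simpa [hvdef, hu] using this
  have hv2 : ‖v‖ ^ 2 ≤ ‖u‖ ^ 2 := by
    exact pow_le_pow_left₀ (norm_nonneg _) hv 2
  have hdne : T x - x ≠ 0 := sub_ne_zero.mpr hx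
  have hdpos : 0 < ‖T x - x‖ ^ 2 := pow_pos (norm_pos_iff.mpr hdne) 2
  have expand : ⟪T x - x, T x - xhat⟫ =
      α * ((1 - α) * (⟪u, v⟫ - ‖u‖ ^ 2) + α * (‖v‖ ^ 2 - ⟪u, v⟫)) := by
    rw [hd, hTxh]
    simp [inner_sub_left, inner_add_right, real_inner_smul_left,
      real_inner_smul_right, real_inner_self_eq_norm_sq, real_inner_comm v u]
    try ring
  have hnormd : ‖T x - x‖ ^ 2 = α ^ 2 * (‖v‖ ^ 2 - 2 * ⟪u, v⟫ + ‖u‖ ^ 2) := by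
    rw [hd, norm_smul, mul_pow, Real.norm_eq_abs, sq_abs,
      norm_sub_sq_real, real_inner_comm v u]
    try ring
  have hkey : 2 * α * ⟪T x - x, T x - xhat⟫ ≤ -(1 - 2 * α) * ‖T x - x‖ ^ 2 := by
    rw [expand, hnormd]
    nlinarith [sq_nonneg α, hα0, hv2]
  have hneg : ⟪T x - x, T x - xhat⟫ < 0 := by
    have h1 : -(1 - 2 * α) * ‖T x - x‖ ^ 2 < 0 := by
      apply mul_neg_of_neg_of_pos _ hdpos
      linarith
    nlinarith
  have hθspos : 0 < θs := by
    rw [hθs]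
    exact div_pos (by linarith) hdpos
  refine ⟨hθspos, ?_⟩
  intro θ hθ
  obtain ⟨hθ0, hθ2⟩ := hθ
  have hip : ⟪T x - x, T x - xhat⟫ = -θs * ‖T x - x‖ ^ 2 := by
    rw [hθs]; field_simp
  have hsq : ‖(T x + θ • (T x - x)) - xhat‖ ^ 2 =
      ‖T x - xhat‖ ^ 2 + 2 * θ * ⟪T x - x, T x - xhat⟫ + θ ^ 2 * ‖T x - x‖ ^ 2 := by
    have h1 : (T x + θ • (T x - x)) - xhat = (T x - xhat) + θ • (T x - x) := by abel
    rw [h1, norm_add_sq_real, real_inner_smul_right, norm_smul, mul_pow,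
      Real.norm_eq_abs, sq_abs, real_inner_comm]
    ring
  have hlt : ‖(T x + θ • (T x - x)) - xhat‖ ^ 2 < ‖T x - xhat‖ ^ 2 := by
    rw [hsq, hip]
    nlinarith [mul_pos (mul_pos hθ0 (by linarith : (0:ℝ) < 2 * θs - θ)) hdpos]
  exact lt_of_pow_lt_pow_left₀ 2 (norm_nonneg _) hlt
end

section
/- Let H be a real Hilbert space, α ∈ (0, 1/2), T : H → H an α-averaged nonexpansive operator, and x̂ ∈ Fix(T). For any x ∈ H with Tx ≠ x, define θ* := −⟨Tx − x, Tx − x̂⟩ / ‖Tx − x‖². Then the function ψ(θ) := ‖T^θ x − x̂‖ is strictly decreasing on the interval [0, θ*]. -/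
open RealInnerProductSpace Filter Topology

theorem stmt_1 {H : Type*} [NormedAddCommGroup H] [InnerProductSpace ℝ H]
    [CompleteSpace H]
    (α : ℝ) (hα : α ∈ Set.Ioo (0 : ℝ) (1/2))
    (T : H → H) (hT : AveragedNE α T)
    (xhat : H) (hxhat : T xhat = xhat)
    (x : H) (hx : T x ≠ x)
    (θs : ℝ) (hθs : θs = -⟪T x - x, T x - xhat⟫ / ‖T x - x‖ ^ 2) :
    StrictAntiOn (fun θ : ℝ => ‖(T x + θ • (T x - x)) - xhat‖)
      (Set.Icc (0 : ℝ) θs) := by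
  set d := T x - x with hdd
  set v := T x - xhat with hvv
  have hd : d ≠ 0 := sub_ne_zero.mpr hx
  have hd2 : (0:ℝ) < ‖d‖ ^ 2 := pow_pos (norm_pos_iff.mpr hd) 2
  have hip : ⟪d, v⟫ = -θs * ‖d‖ ^ 2 := by
    rw [hθs]
    field_simp
  have hrw : ∀ θ : ℝ, T x + θ • d - xhat = v + θ • d := by
    intro θ; rw [hvv]; abel
  have hsq : ∀ θ : ℝ, ‖v + θ • d‖ ^ 2 = ‖v‖ ^ 2 + 2 * θ * ⟪d, v⟫ + θ ^ 2 * ‖d‖ ^ 2 := by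
    intro θ
    rw [norm_add_sq_real, real_inner_smul_right, norm_smul, real_inner_comm]
    simp [mul_pow, abs_mul_abs_self, sq_abs]
    ring
  intro a ha b hb hab
  simp only [hrw]
  have key : ‖v + b • d‖ ^ 2 < ‖v + a • d‖ ^ 2 := by
    rw [hsq, hsq, hip]
    have h1 : 0 < 2 * θs - a - b := by
      have := ha.2; have := hb.2; linarith
    nlinarith [mul_pos (mul_pos (sub_pos.mpr hab) h1) hd2]
  nlinarith [norm_nonneg (v + b • d), norm_nonneg (v + a • d)]
end

section
/- Let H be a real Hilbert space, α ∈ [1/2, 1), T : H → H an α-averaged nonexpansive operator, and x̂ ∈ Fix(T). For any x ∈ H with Tx ≠ x, define θ* := −⟨Tx − x, Tx − x̂⟩ / ‖Tx − x‖². If ‖Tx − (x + x̂)/2‖ ≤ ‖x − (x + x̂)/2‖ (i.e., Tx lies in the closed ball centered at the midpoint of x and x̂ with radius half the distance from x to x̂), then θ* ≥ 0 and ‖T^θ x − x̂‖ ≤ ‖Tx − x̂‖ for every θ ∈ [0, 2θ*]. -/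
open RealInnerProductSpace Filter Topology

theorem stmt_2 {H : Type*} [NormedAddCommGroup H] [InnerProductSpace ℝ H]
    [CompleteSpace H]
    (α : ℝ) (hα : α ∈ Set.Ico (1/2 : ℝ) 1)
    (T : H → H) (hT : AveragedNE α T)
    (xhat : H) (hxhat : T xhat = xhat)
    (x : H) (hx : T x ≠ x)
    (θs : ℝ) (hθs : θs = -⟪T x - x, T x - xhat⟫ / ‖T x - x‖ ^ 2)
    (hball : ‖T x - (1/2 : ℝ) • (x + xhat)‖ ≤ ‖x - (1/2 : ℝ) • (x + xhat)‖) :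
    0 ≤ θs ∧ ∀ θ ∈ Set.Icc (0 : ℝ) (2 * θs),
      ‖(T x + θ • (T x - x)) - xhat‖ ≤ ‖T x - xhat‖ := by

  have hd : T x - x ≠ 0 := sub_ne_zero.mpr hx
  have hd2 : (0:ℝ) < ‖T x - x‖ ^ 2 := pow_pos (norm_pos_iff.mpr hd) 2
  set d := T x - x with hdd
  set e := T x - xhat with hee
  have hde : T x - (1/2 : ℝ) • (x + xhat) = (1/2 : ℝ) • (d + e) := by
    rw [hdd, hee]; module
  have hxm : x - (1/2 : ℝ) • (x + xhat) = (1/2 : ℝ) • (e - d) := by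
    rw [hdd, hee]; module
  rw [hde, hxm, norm_smul, norm_smul] at hball
  have hb2 : ‖d + e‖ ≤ ‖e - d‖ := by
    have : (0:ℝ) < ‖(1/2 : ℝ)‖ := by norm_num
    exact le_of_mul_le_mul_left hball this
  have hsq : ‖d + e‖ * ‖d + e‖ ≤ ‖e - d‖ * ‖e - d‖ :=
    mul_self_le_mul_self (norm_nonneg _) hb2
  have h1 : ‖d + e‖ ^ 2 = ‖d‖ ^ 2 + 2 * ⟪d, e⟫ + ‖e‖ ^ 2 := norm_add_sq_real d e
  have h2 : ‖e - d‖ ^ 2 = ‖e‖ ^ 2 - 2 * ⟪e, d⟫ + ‖d‖ ^ 2 := norm_sub_sq_real e d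
  have hcomm : ⟪e, d⟫ = ⟪d, e⟫ := real_inner_comm d e
  have hip : ⟪d, e⟫ ≤ 0 := by nlinarith [hsq, h1, h2]
  have hθs0 : 0 ≤ θs := by
    rw [hθs]
    exact div_nonneg (by linarith) (le_of_lt hd2)
  refine ⟨hθs0, fun θ hθ => ?_⟩
  have hθ2 : θ * ‖d‖ ^ 2 ≤ -2 * ⟪d, e⟫ := by
    have h3 : θ ≤ 2 * (-⟪d, e⟫ / ‖d‖ ^ 2) := by rw [← hθs]; exact hθ.2
    have h4 : 2 * (-⟪d, e⟫ / ‖d‖ ^ 2) * ‖d‖ ^ 2 = -2 * ⟪d, e⟫ := by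
      field_simp
    have h5 := mul_le_mul_of_nonneg_right h3 hd2.le
    rw [h4] at h5
    exact h5
  have hkey : T x + θ • d - xhat = e + θ • d := by rw [hdd, hee]; module
  rw [hkey]
  have hexp : ‖e + θ • d‖ ^ 2 = ‖e‖ ^ 2 + 2 * (θ * ⟪e, d⟫) + θ ^ 2 * ‖d‖ ^ 2 := by
    rw [norm_add_sq_real, real_inner_smul_right, norm_smul, Real.norm_eq_abs]
    ring_nf
    rw [sq_abs]
  have hle : ‖e + θ • d‖ ^ 2 ≤ ‖e‖ ^ 2 := by
    rw [hexp, hcomm]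
    nlinarith [hθ.1, hθ2, sq_nonneg θ]
  nlinarith [norm_nonneg (e + θ • d), norm_nonneg e, hle]
end

section
/- Let H be a real Hilbert space, α ∈ [1/2, 1), T : H → H an α-averaged nonexpansive operator, and x̂ ∈ Fix(T). For any x ∈ H with Tx ≠ x, define θ* := −⟨Tx − x, Tx − x̂⟩ / ‖Tx − x‖². If ‖Tx − (x + x̂)/2‖ > ‖x − (x + x̂)/2‖ (i.e., Tx lies outside the closed ball centered at the midpoint of x and x̂ with radius half the distance from x to x̂), then θ* < 0 and ‖T^θ x − x̂‖ ≤ ‖Tx − x̂‖ for every θ ∈ [2θ*, 0]. -/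
open RealInnerProductSpace Filter Topology

theorem stmt_3 {H : Type*} [NormedAddCommGroup H] [InnerProductSpace ℝ H]
    [CompleteSpace H]
    (α : ℝ) (hα : α ∈ Set.Ico (1/2 : ℝ) 1)
    (T : H → H) (hT : AveragedNE α T)
    (xhat : H) (hxhat : T xhat = xhat)
    (x : H) (hx : T x ≠ x)
    (θs : ℝ) (hθs : θs = -⟪T x - x, T x - xhat⟫ / ‖T x - x‖ ^ 2)
    (hball : ‖x - (1/2 : ℝ) • (x + xhat)‖ < ‖T x - (1/2 : ℝ) • (x + xhat)‖) :
    θs < 0 ∧ ∀ θ ∈ Set.Icc (2 * θs) (0 : ℝ),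
      ‖(T x + θ • (T x - x)) - xhat‖ ≤ ‖T x - xhat‖ := by
  set u := T x - x with hu'
  set v := T x - xhat with hv'
  have hu : u ≠ 0 := sub_ne_zero.mpr hx
  have hun : (0:ℝ) < ‖u‖ := norm_pos_iff.mpr hu
  -- rewrite the ball condition
  have e1 : x - (1/2 : ℝ) • (x + xhat) = (1/2 : ℝ) • (v - u) := by
    rw [hu', hv']; module
  have e2 : T x - (1/2 : ℝ) • (x + xhat) = (1/2 : ℝ) • (u + v) := by
    rw [hu', hv']; module
  rw [e1, e2, norm_smul, norm_smul] at hball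
  have hball' : ‖v - u‖ < ‖u + v‖ := by
    have h2 : ‖((1:ℝ)/2 : ℝ)‖ = 1/2 := by norm_num
    rw [h2] at hball; linarith
  have hip : (0:ℝ) < ⟪u, v⟫ := by
    have h1 : ‖u + v‖ ^ 2 = ‖u‖ ^ 2 + 2 * ⟪u, v⟫ + ‖v‖ ^ 2 := norm_add_sq_real u v
    have h2 : ‖v - u‖ ^ 2 = ‖v‖ ^ 2 - 2 * ⟪v, u⟫ + ‖u‖ ^ 2 := norm_sub_sq_real v u
    have h3 : ⟪v, u⟫ = ⟪u, v⟫ := real_inner_comm u v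
    nlinarith [norm_nonneg (v - u), norm_nonneg (u + v)]
  have hθsneg : θs < 0 := by
    rw [hθs]
    exact div_neg_of_neg_of_pos (by linarith) (by positivity)
  refine ⟨hθsneg, fun θ hθ => ?_⟩
  have hθ0 : θ ≤ 0 := hθ.2
  have hθ1 : 2 * θs ≤ θ := hθ.1
  have hlb : -2 * ⟪u, v⟫ ≤ θ * ‖u‖ ^ 2 := by
    have : 2 * (-⟪u, v⟫ / ‖u‖ ^ 2) ≤ θ := by rw [← hθs]; exact hθ1
    have hn : (0:ℝ) < ‖u‖ ^ 2 := by positivity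
    calc -2 * ⟪u, v⟫ = 2 * (-⟪u, v⟫ / ‖u‖ ^ 2) * ‖u‖ ^ 2 := by field_simp
    _ ≤ θ * ‖u‖ ^ 2 := by nlinarith
  have e3 : T x + θ • u - xhat = v + θ • u := by rw [hu', hv']; module
  rw [e3]
  have expand : ‖v + θ • u‖ ^ 2 = ‖v‖ ^ 2 + 2 * θ * ⟪u, v⟫ + θ ^ 2 * ‖u‖ ^ 2 := by
    rw [norm_add_sq_real, real_inner_smul_right, norm_smul, real_inner_comm]
    rw [Real.norm_eq_abs]
    rw [mul_pow, sq_abs]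
    ring
  have hle : ‖v + θ • u‖ ^ 2 ≤ ‖v‖ ^ 2 := by nlinarith
  nlinarith [norm_nonneg (v + θ • u), norm_nonneg v]
end

section
/- Let H be a real Hilbert space, α ∈ (0, 1/2], and T : H → H an α-averaged nonexpansive operator. For any x ∈ H with Tx ≠ x, define θ := −⟨Tx − x, Tx − T²x⟩ / ‖Tx − x‖², where T² = T ∘ T. Then 1 − 2α ≤ θ ≤ 1. -/
open RealInnerProductSpace Filter Topology

theorem stmt_4 {H : Type*} [NormedAddCommGroup H] [InnerProductSpace ℝ H]
    [CompleteSpace H]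
    (α : ℝ) (hα : α ∈ Set.Ioc (0 : ℝ) (1/2))
    (T : H → H) (hT : AveragedNE α T)
    (x : H) (hx : T x ≠ x)
    (θ : ℝ) (hθ : θ = -⟪T x - x, T x - T (T x)⟫ / ‖T x - x‖ ^ 2) :
    1 - 2 * α ≤ θ ∧ θ ≤ 1 := by
  obtain ⟨hα0, hα2⟩ := hα
  obtain ⟨N, hN, hTN⟩ := hT
  set a : H := N x - x with ha_def
  set b : H := N (T x) - T x with hb_def
  have h1 : T x - x = α • a := by
    rw [hTN, ha_def]; module
  have h2 : T x - T (T x) = -(α • b) := by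
    rw [hTN (T x), hb_def]; module
  have ha : a ≠ 0 := by
    intro h
    apply hx
    have : T x - x = 0 := by rw [h1, h, smul_zero]
    rwa [sub_eq_zero] at this
  have hna : (0:ℝ) < ‖a‖ := norm_pos_iff.mpr ha
  -- key nonexpansiveness inequality
  have hNab : N x - N (T x) = (1 - α) • a - b := by
    rw [ha_def, hb_def, hTN x]; module
  have hxTx : ‖x - T x‖ = α * ‖a‖ := by
    have : x - T x = -(α • a) := by rw [hTN x, ha_def]; module
    rw [this, norm_neg, norm_smul, Real.norm_eq_abs, abs_of_pos hα0]
  have hkey : ‖(1 - α) • a - b‖ ≤ α * ‖a‖ := by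
    rw [← hNab, ← hxTx]; exact hN x (T x)
  have hkey2 : ‖(1 - α) • a - b‖ ^ 2 ≤ (α * ‖a‖) ^ 2 := by
    have := norm_nonneg ((1 - α) • a - b)
    nlinarith [hkey]
  have hexp : ‖(1 - α) • a - b‖ ^ 2
      = (1 - α) ^ 2 * ‖a‖ ^ 2 - 2 * (1 - α) * ⟪a, b⟫ + ‖b‖ ^ 2 := by
    rw [norm_sub_sq_real, real_inner_smul_left, norm_smul, Real.norm_eq_abs]
    have h1α : (0:ℝ) ≤ 1 - α := by linarith
    rw [abs_of_nonneg h1α]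
    ring
  have hinner : (1 - 2 * α) * ‖a‖ ^ 2 + ‖b‖ ^ 2 ≤ 2 * (1 - α) * ⟪a, b⟫ := by
    nlinarith [hkey2, hexp]
  -- bounds on ‖b‖
  have hb_low : (1 - 2 * α) * ‖a‖ ≤ ‖b‖ := by
    have htri : (1 - α) * ‖a‖ - ‖b‖ ≤ ‖(1 - α) • a - b‖ := by
      have := norm_sub_norm_le ((1 - α) • a) b
      rw [norm_smul, Real.norm_eq_abs, abs_of_nonneg (by linarith : (0:ℝ) ≤ 1 - α)] at this
      linarith
    linarith [hkey]
  have hb_up : ‖b‖ ≤ ‖a‖ := by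
    have heq : ‖b‖ = ‖((1 - α) • a - b) - (1 - α) • a‖ := by
      rw [show ((1 - α) • a - b) - (1 - α) • a = -b by abel, norm_neg]
    have htri := norm_sub_le ((1 - α) • a - b) ((1 - α) • a)
    rw [norm_smul, Real.norm_eq_abs, abs_of_nonneg (by linarith : (0:ℝ) ≤ 1 - α)] at htri
    nlinarith [hkey, heq, htri]
  -- lower bound on inner product
  have hlow : (1 - 2 * α) * ‖a‖ ^ 2 ≤ ⟪a, b⟫ := by
    have h12 : (0:ℝ) ≤ 1 - 2 * α := by linarith
    have hbsq : (1 - 2 * α) ^ 2 * ‖a‖ ^ 2 ≤ ‖b‖ ^ 2 := by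
      nlinarith [hb_low, norm_nonneg a, mul_nonneg h12 (norm_nonneg a)]
    nlinarith [hinner]
  have hup : ⟪a, b⟫ ≤ ‖a‖ ^ 2 := by
    calc ⟪a, b⟫ ≤ ‖a‖ * ‖b‖ := real_inner_le_norm a b
      _ ≤ ‖a‖ * ‖a‖ := mul_le_mul_of_nonneg_left hb_up (norm_nonneg a)
      _ = ‖a‖ ^ 2 := by ring
  -- rewrite θ
  have hθ' : θ = ⟪a, b⟫ / ‖a‖ ^ 2 := by
    rw [hθ, h1, h2, inner_neg_right, real_inner_smul_left, real_inner_smul_right,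
      norm_smul, Real.norm_eq_abs, abs_of_pos hα0]
    rw [neg_neg, mul_pow]
    rw [show α * (α * ⟪a, b⟫) = α ^ 2 * ⟪a, b⟫ by ring]
    rw [mul_div_mul_left _ _ (by positivity : (α:ℝ) ^ 2 ≠ 0)]
  constructor
  · rw [hθ', le_div_iff₀ (by positivity)]
    linarith [hlow]
  · rw [hθ', div_le_one (by positivity)]
    linarith [hup]
end

section
/- Let H be a real Hilbert space, α ∈ (0, 1/2], and T : H → H an α-averaged nonexpansive operator. For any x ∈ H with Tx ≠ x, define θ := −⟨Tx − x, Tx − T²x⟩ / ‖Tx − x‖², where T² = T ∘ T, and T^θ := T + θ(T − I). Then: if θ = 1 and α = 1/2, the operator T^θ is nonexpansive; otherwise, T^θ is α(1+θ)-averaged nonexpansive (and in that case α(1+θ) ∈ (0,1)). -/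
open RealInnerProductSpace Filter Topology

theorem stmt_5 {H : Type*} [NormedAddCommGroup H] [InnerProductSpace ℝ H]
    [CompleteSpace H]
    (α : ℝ) (hα : α ∈ Set.Ioc (0 : ℝ) (1/2))
    (T : H → H) (hT : AveragedNE α T)
    (x : H) (hx : T x ≠ x)
    (θ : ℝ) (hθ : θ = -⟪T x - x, T x - T (T x)⟫ / ‖T x - x‖ ^ 2) :
    (θ = 1 ∧ α = 1/2 → Nonexpansive (fun y => T y + θ • (T y - y))) ∧
    (¬(θ = 1 ∧ α = 1/2) →
      α * (1 + θ) ∈ Set.Ioo (0 : ℝ) 1 ∧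
      AveragedNE (α * (1 + θ)) (fun y => T y + θ • (T y - y))) := by
  obtain ⟨hα0, hα2⟩ := hα
  obtain ⟨N, hN, hTN⟩ := hT
  set u := T x - x with hu_def
  set w := T (T x) - T x with hw_def
  have hu : u ≠ 0 := sub_ne_zero.mpr hx
  have hun : (0:ℝ) < ‖u‖ := norm_pos_iff.mpr hu
  have hα1 : (0:ℝ) < 1 - α := by linarith
  -- key identity
  have hkey : w - (1 - α) • u = α • (N (T x) - N x) := by
    rw [hu_def, hw_def, hTN (T x), hTN x]
    module
  have hNle : ‖N (T x) - N x‖ ≤ ‖u‖ := hN (T x) x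
  have hkeyn : ‖w - (1 - α) • u‖ ≤ α * ‖u‖ := by
    rw [hkey, norm_smul, Real.norm_eq_abs, abs_of_pos hα0]
    exact mul_le_mul_of_nonneg_left hNle hα0.le
  have hwle : ‖w‖ ≤ ‖u‖ := by
    calc ‖w‖ = ‖(w - (1 - α) • u) + (1 - α) • u‖ := by congr 1; abel
      _ ≤ ‖w - (1 - α) • u‖ + ‖(1 - α) • u‖ := norm_add_le _ _
      _ ≤ α * ‖u‖ + (1 - α) * ‖u‖ := by
          rw [norm_smul, Real.norm_eq_abs, abs_of_pos hα1]
          linarith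
      _ = ‖u‖ := by ring
  have hinner_nonneg : 0 ≤ ⟪u, w⟫ := by
    have hsq : ‖w - (1 - α) • u‖ ^ 2 ≤ (α * ‖u‖) ^ 2 := by
      apply pow_le_pow_left₀ (norm_nonneg _) hkeyn
    have hexp : ‖w - (1 - α) • u‖ ^ 2
        = ‖w‖ ^ 2 - 2 * (1 - α) * ⟪w, u⟫ + (1 - α) ^ 2 * ‖u‖ ^ 2 := by
      rw [@norm_sub_sq_real, real_inner_smul_right, norm_smul, Real.norm_eq_abs,
        abs_of_pos hα1, mul_pow]
      ring
    have h2 : 2 * (1 - α) * ⟪w, u⟫ ≥ ‖w‖ ^ 2 + (1 - 2 * α) * ‖u‖ ^ 2 := by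
      nlinarith
    have : 0 ≤ ⟪w, u⟫ := by nlinarith [sq_nonneg ‖w‖, sq_nonneg ‖u‖]
    rwa [real_inner_comm]
  have hinner_le : ⟪u, w⟫ ≤ ‖u‖ ^ 2 := by
    calc ⟪u, w⟫ ≤ ‖u‖ * ‖w‖ := real_inner_le_norm u w
      _ ≤ ‖u‖ * ‖u‖ := mul_le_mul_of_nonneg_left hwle (norm_nonneg _)
      _ = ‖u‖ ^ 2 := (sq ‖u‖).symm
  have hθ' : θ = ⟪u, w⟫ / ‖u‖ ^ 2 := by
    rw [hθ]
    congr 1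
    have : T x - T (T x) = -w := by rw [hw_def]; abel
    rw [this, inner_neg_right, neg_neg]
  have hθ0 : 0 ≤ θ := hθ' ▸ div_nonneg hinner_nonneg (by positivity)
  have hθ1 : θ ≤ 1 := by
    rw [hθ', div_le_one (by positivity)]
    exact hinner_le
  constructor
  · rintro ⟨h1, h2⟩
    have : (fun y => T y + θ • (T y - y)) = N := by
      funext y
      rw [hTN y, h1, h2]
      module
    rw [this]
    exact hN
  · intro hcon
    have hlt : α * (1 + θ) < 1 := by
      rcases lt_or_eq_of_le hα2 with h | h
      · nlinarith
      · have : θ ≠ 1 := fun ht => hcon ⟨ht, h⟩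
        have : θ < 1 := lt_of_le_of_ne hθ1 this
        nlinarith
    refine ⟨⟨by nlinarith, hlt⟩, N, hN, fun y => ?_⟩
    show T y + θ • (T y - y) = (1 - α * (1 + θ)) • y + (α * (1 + θ)) • N y
    rw [hTN y]
    module
end

section
/- Let H be a real Hilbert space, α ∈ (0, 1/2], T : H → H an α-averaged nonexpansive operator with Fix(T) ≠ ∅, t ∈ (0,1), and let (x^k) be a TKMA sequence for T: x^{k+1} = (1−t)T²x^k + t T^{θ_k}x^k with θ_k := −⟨Tx^k − x^k, Tx^k − T²x^k⟩ / ‖Tx^k − x^k‖² and Tx^k ≠ x^k for all k. Then for every x̂ ∈ Fix(T) and every k ≥ 0, ‖x^{k+1} − x̂‖² ≤ ‖x^k − x̂‖² − ((1−t)²(1−α)/α)·‖Tx^k − x^k‖². -/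
open RealInnerProductSpace Filter Topology

private lemma tkma_expand_sq {H : Type*} [NormedAddCommGroup H] [InnerProductSpace ℝ H]
    (c u v : H) (β γ : ℝ) :
    ‖c + β • u - γ • v‖ ^ 2 =
      ‖c‖^2 + β^2*‖u‖^2 + γ^2*‖v‖^2 + 2*β*⟪c,u⟫ - 2*γ*⟪c,v⟫ - 2*β*γ*⟪u,v⟫ := by
  simp only [← real_inner_self_eq_norm_sq]
  simp only [inner_sub_left, inner_sub_right, inner_add_left, inner_add_right,
    real_inner_smul_left, real_inner_smul_right,
    real_inner_comm u c, real_inner_comm v c, real_inner_comm v u]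
  ring

private lemma tkma_expand3 {H : Type*} [NormedAddCommGroup H] [InnerProductSpace ℝ H]
    (c u v : H) :
    ‖c + u - v‖ ^ 2 =
      ‖c‖^2 + ‖u‖^2 + ‖v‖^2 + 2*⟪c,u⟫ - 2*⟪c,v⟫ - 2*⟪u,v⟫ := by
  have h := tkma_expand_sq c u v 1 1
  simpa using h

private lemma tkma_avg_sq {H : Type*} [NormedAddCommGroup H] [InnerProductSpace ℝ H]
    (α : ℝ) (hα0 : 0 < α) (T : H → H) (hT : AveragedNE α T) (a b : H) :
    ‖T a - T b‖^2 + (1-α)/α * ‖(T a - a) - (T b - b)‖^2 ≤ ‖a - b‖^2 := by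
  obtain ⟨N, hN, hTN⟩ := hT
  have key : T a - T b - (1-α) • (a - b) = α • (N a - N b) := by
    rw [hTN a, hTN b]; module
  have h1 : ‖T a - T b - (1-α) • (a - b)‖ ≤ α * ‖a - b‖ := by
    rw [key, norm_smul, Real.norm_eq_abs, abs_of_pos hα0]
    exact mul_le_mul_of_nonneg_left (hN a b) hα0.le
  have h2 : ‖T a - T b - (1-α) • (a - b)‖^2 ≤ α^2 * ‖a - b‖^2 := by
    nlinarith [norm_nonneg (T a - T b - (1-α) • (a - b)), norm_nonneg (a - b), h1,
      mul_pos hα0 hα0]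
  have h3 : ‖T a - T b - (1-α) • (a - b)‖^2
      = ‖T a - T b‖^2 - 2*(1-α)*⟪T a - T b, a - b⟫ + (1-α)^2*‖a - b‖^2 := by
    rw [norm_sub_sq_real, real_inner_smul_right, norm_smul, Real.norm_eq_abs, mul_pow, sq_abs]
    ring
  have h4 : ‖(T a - a) - (T b - b)‖^2
      = ‖T a - T b‖^2 - 2*⟪T a - T b, a - b⟫ + ‖a - b‖^2 := by
    have hv : (T a - a) - (T b - b) = (T a - T b) - (a - b) := by abel
    rw [hv, norm_sub_sq_real]
  rw [h3] at h2
  rw [h4, add_comm, ← le_sub_iff_add_le, div_mul_eq_mul_div, div_le_iff₀ hα0]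
  nlinarith [h2]

private lemma tkma_nonexp {H : Type*} [NormedAddCommGroup H] [InnerProductSpace ℝ H]
    (α : ℝ) (hα0 : 0 < α) (hα1 : α < 1) (T : H → H) (hT : AveragedNE α T) :
    Nonexpansive T := by
  obtain ⟨N, hN, hTN⟩ := hT
  intro a b
  have key : T a - T b = (1-α) • (a - b) + α • (N a - N b) := by
    rw [hTN a, hTN b]; module
  calc ‖T a - T b‖ ≤ ‖(1-α) • (a - b)‖ + ‖α • (N a - N b)‖ := by
        rw [key]; exact norm_add_le _ _
    _ = (1-α) * ‖a - b‖ + α * ‖N a - N b‖ := by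
        rw [norm_smul, norm_smul, Real.norm_eq_abs, Real.norm_eq_abs,
          abs_of_pos (by linarith), abs_of_pos hα0]
    _ ≤ (1-α) * ‖a - b‖ + α * ‖a - b‖ := by
        have := hN a b
        nlinarith [hN a b]
    _ = ‖a - b‖ := by ring

theorem stmt_6 {H : Type*} [NormedAddCommGroup H] [InnerProductSpace ℝ H]
    [CompleteSpace H]
    (α : ℝ) (hα : α ∈ Set.Ioc (0 : ℝ) (1/2))
    (T : H → H) (hT : AveragedNE α T)
    (hfix : ∃ z, T z = z)
    (t : ℝ) (ht : t ∈ Set.Ioo (0 : ℝ) 1)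
    (x : ℕ → H) (θ : ℕ → ℝ)
    (hTx : ∀ k, T (x k) ≠ x k)
    (hθ : ∀ k, θ k = -⟪T (x k) - x k, T (x k) - T (T (x k))⟫ / ‖T (x k) - x k‖ ^ 2)
    (hrec : ∀ k, x (k + 1) =
      (1 - t) • T (T (x k)) + t • (T (x k) + θ k • (T (x k) - x k))) :
    ∀ xhat, T xhat = xhat → ∀ k : ℕ,
      ‖x (k + 1) - xhat‖ ^ 2 ≤
        ‖x k - xhat‖ ^ 2 - ((1 - t) ^ 2 * (1 - α) / α) * ‖T (x k) - x k‖ ^ 2 := by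
  obtain ⟨hα0, hα2⟩ := hα
  obtain ⟨ht0, ht1⟩ := ht
  have hα1 : α < 1 := by linarith
  intro xhat hxhat k
  have hθk := hθ k
  have hreck := hrec k
  have hTxk := hTx k
  set y := x k with hy
  set c := y - xhat with hc
  set u := T y - y with hu
  set v := T y - T (T y) with hv
  set κ := (1-α)/α with hκ
  have hκ1 : (1:ℝ) ≤ κ := by rw [hκ, le_div_iff₀ hα0]; linarith
  have hunz : u ≠ 0 := sub_ne_zero.mpr hTxk
  have hU : 0 < ‖u‖^2 := by
    have := norm_pos_iff.mpr hunz
    positivity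
  have hVnn : (0:ℝ) ≤ ‖v‖^2 := by positivity
  have havg := tkma_avg_sq α hα0 T hT
  -- vector identities
  have hTy : T y - xhat = c + u := by rw [hc, hu]; abel
  have hT2y : T (T y) - xhat = c + u - v := by rw [hc, hu, hv]; abel
  have hT2Ty : T (T y) - T y = -v := by rw [hv]; abel
  -- inequality (ii): at (y, xhat)
  have hI2raw := havg y xhat
  rw [hxhat, sub_self, sub_zero] at hI2raw
  rw [hTy, ← hu, ← hc, ← hκ] at hI2raw
  have hexp_cu := norm_add_sq_real c u
  have hS2 : (1+κ)*‖u‖^2 + 2*⟪c,u⟫ ≤ 0 := by linarith [hI2raw, hexp_cu]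
  -- inequality (i): at (T y, xhat)
  have hI1raw := havg (T y) xhat
  rw [hxhat, sub_self, sub_zero] at hI1raw
  rw [hT2y, hTy, hT2Ty, norm_neg, ← hκ] at hI1raw
  have hexp3 := tkma_expand3 c u v
  have hS1 : (1+κ)*‖v‖^2 ≤ 2*⟪c,v⟫ + 2*⟪u,v⟫ := by linarith [hI1raw, hexp3, hexp_cu]
  -- inequality (iii): at (T y, y)
  have hI3raw := havg (T y) y
  have hsum : T (T y) - T y - (T y - y) = -(u + v) := by rw [hu, hv]; abel
  rw [hsum] at hI3raw
  rw [hT2Ty] at hI3raw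
  simp only [norm_neg] at hI3raw
  rw [← hu, ← hκ] at hI3raw
  have hexp_uv := norm_add_sq_real u v
  rw [hexp_uv] at hI3raw
  have hI3 : ‖v‖^2 + κ*(‖u‖^2 + 2*⟪u,v⟫ + ‖v‖^2) ≤ ‖u‖^2 := hI3raw
  -- p ≤ 0 and θ ≥ 0
  have h2κp : 2*κ*⟪u,v⟫ ≤ 0 := by
    linarith [hI3, mul_nonneg (by linarith : (0:ℝ) ≤ κ - 1) hU.le,
      mul_nonneg (by linarith : (0:ℝ) ≤ 1 + κ) hVnn]
  have hple : ⟪u,v⟫ ≤ 0 := by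
    have hk2 : (0:ℝ) < 2*κ := by linarith
    exact le_of_mul_le_mul_left (by rw [mul_zero]; exact h2κp) hk2
  have hθ0 : 0 ≤ θ k := by
    rw [hθk]
    apply div_nonneg (by linarith) (by positivity)
  have hθU : θ k * ‖u‖^2 = -⟪u,v⟫ := by
    rw [hθk]; field_simp
  have hp : ⟪u,v⟫ = -(θ k * ‖u‖^2) := by linarith
  -- Cauchy-Schwarz: θ² U ≤ V
  have hCS : ⟪u,v⟫ * ⟪u,v⟫ ≤ ‖u‖^2 * ‖v‖^2 := by
    have := real_inner_mul_inner_self_le u v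
    rwa [real_inner_self_eq_norm_sq, real_inner_self_eq_norm_sq] at this
  have hsq : (θ k * ‖u‖^2)^2 = ⟪u,v⟫^2 := by rw [hθU]; ring
  have hS4 : (θ k)^2 * ‖u‖^2 ≤ ‖v‖^2 := by
    have h2 : (θ k)^2 * ‖u‖^2 * ‖u‖^2 ≤ ‖v‖^2 * ‖u‖^2 := by
      have e1 : (θ k)^2 * ‖u‖^2 * ‖u‖^2 = (θ k * ‖u‖^2)^2 := by ring
      rw [e1, hsq]
      calc ⟪u,v⟫^2 = ⟪u,v⟫ * ⟪u,v⟫ := by ring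
        _ ≤ ‖u‖^2 * ‖v‖^2 := hCS
        _ = ‖v‖^2 * ‖u‖^2 := by ring
    exact le_of_mul_le_mul_right h2 hU
  -- V ≤ U
  have hS5 : ‖v‖^2 ≤ ‖u‖^2 := by
    have hne := tkma_nonexp α hα0 hα1 T hT
    have h1 : ‖v‖ ≤ ‖u‖ := by
      calc ‖v‖ = ‖T (T y) - T y‖ := by rw [hv, norm_sub_rev]
        _ ≤ ‖T y - y‖ := hne (T y) y
        _ = ‖u‖ := by rw [hu]
    exact pow_le_pow_left₀ (norm_nonneg v) h1 2
  -- expansion of the recursion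
  have hw : x (k+1) - xhat = c + (1 + t*θ k) • u - (1-t) • v := by
    rw [hreck, hc, hu, hv]; module
  have hE : ‖x (k+1) - xhat‖^2 =
      ‖c‖^2 + (1 + t*θ k)^2*‖u‖^2 + (1-t)^2*‖v‖^2 + 2*(1 + t*θ k)*⟪c,u⟫
        - 2*(1-t)*⟪c,v⟫ - 2*(1 + t*θ k)*(1-t)*⟪u,v⟫ := by
    rw [hw]; exact tkma_expand_sq c u v _ _
  rw [hp] at hE
  -- coefficient rewrite
  have hco : (1 - t) ^ 2 * (1 - α) / α * ‖u‖^2 = (1-t)^2 * κ * ‖u‖^2 := by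
    rw [hκ]; ring
  rw [hE, hco]
  -- the six sign facts
  have hβ : (0:ℝ) ≤ 1 + t*θ k := by linarith [mul_nonneg ht0.le hθ0]
  have h1 : (1 + t*θ k) * ((1+κ)*‖u‖^2 + 2*⟪c,u⟫) ≤ 0 :=
    mul_nonpos_of_nonneg_of_nonpos hβ hS2
  have h2 : (1-t) * ((1+κ)*‖v‖^2 - 2*⟪c,v⟫ + 2*(θ k)*‖u‖^2) ≤ 0 := by
    apply mul_nonpos_of_nonneg_of_nonpos (by linarith)
    have : (θ k)*‖u‖^2 = -⟪u,v⟫ := hθU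
    linarith [hS1]
  have h3 : t*(2-t) * ((θ k)^2*‖u‖^2 - ‖v‖^2) ≤ 0 :=
    mul_nonpos_of_nonneg_of_nonpos (mul_nonneg ht0.le (by linarith)) (by linarith)
  have h4 : t*((1-κ)*((θ k)*‖u‖^2)) ≤ 0 :=
    mul_nonpos_of_nonneg_of_nonpos ht0.le
      (mul_nonpos_of_nonpos_of_nonneg (by linarith) (mul_nonneg hθ0 hU.le))
  have h5 : t*(2-t)*(‖v‖^2 - κ*‖u‖^2) ≤ 0 := by
    apply mul_nonpos_of_nonneg_of_nonpos (mul_nonneg ht0.le (by linarith))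
    linarith [mul_nonneg (by linarith : (0:ℝ) ≤ κ - 1) hU.le]
  have h6 : (0:ℝ) ≤ (1-t)*(t+κ)*‖v‖^2 := by
    apply mul_nonneg (mul_nonneg (by linarith) (by linarith)) hVnn
  linarith [h1, h2, h3, h4, h5, h6]
end

section
/- Let H be a real Hilbert space, α ∈ (0, 1/2], T : H → H an α-averaged nonexpansive operator with Fix(T) ≠ ∅, t ∈ (0,1), and let (x^k) be a TKMA sequence for T: x^{k+1} = (1−t)T²x^k + t T^{θ_k}x^k with θ_k := −⟨Tx^k − x^k, Tx^k − T²x^k⟩ / ‖Tx^k − x^k‖² and Tx^k ≠ x^k for all k. Then the series ∑_{k=0}^∞ ‖Tx^k − x^k‖² converges; more precisely, for any x̂ ∈ Fix(T), ((1−t)²(1−α)/α) · ∑_{k=0}^∞ ‖Tx^k − x^k‖² ≤ ‖x⁰ − x̂‖². -/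
open RealInnerProductSpace Filter Topology

/-!
Put `β = 1/(2α)`, `r = Tx − x`, `s = T²x − Tx` and `a = x − x̂` for a fixed point `x̂`. The next
iterate is `x⁺ − x̂ = a + (1 + tθ) r + (1 − t) s`, where `θ ‖r‖² = ⟪r, s⟫`, so `θ² ≤ 1` by
Cauchy–Schwarz and `‖s‖ ≤ ‖r‖`. Since `I − T` is `β`-cocoercive, `⟪a, r⟫ ≤ −β‖r‖²` and
`⟪a + r, s⟫ ≤ −β‖s‖²`; expanding `‖x⁺ − x̂‖²` with these bounds leaves a quadratic in `θ` that is
nonpositive on `[−1, 1]` when `β ≥ 1`, i.e. `α ≤ 1/2`. This gives the Fejér-type descent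
`‖x⁺ − x̂‖² + (1 − t)² (1 − α)/α ‖r‖² ≤ ‖x − x̂‖²`, which telescopes.
-/

lemma summable_and_tsum_le_of_succ_add_le {u b : ℕ → ℝ} (hu : ∀ k, 0 ≤ u k)
    (hb : ∀ k, 0 ≤ b k) (h : ∀ k, u (k + 1) + b k ≤ u k) :
    Summable b ∧ ∑' k, b k ≤ u 0 := by
  have partial_sum_le : ∀ n, ∑ k ∈ Finset.range n, b k ≤ u 0 - u n := by
    intro n
    induction n with
    | zero => simp
    | succ n ih => rw [Finset.sum_range_succ]; linarith [h n]
  have bounded : ∀ n, ∑ k ∈ Finset.range n, b k ≤ u 0 := fun n =>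
    (partial_sum_le n).trans (sub_le_self _ (hu n))
  have hsum : Summable b := summable_of_sum_range_le hb bounded
  exact ⟨hsum, hsum.tsum_le_of_sum_range_le bounded⟩

/-- The quadratic is `≤ 0` at `θ = ±1`; when it is concave, its vertex is handled by the
discriminant bound `t (β − 1)² ≤ (2 − t)(2β − 1)(2(1 − t)β − 1)`. -/
lemma tkma_quadratic_nonpos {β t θ : ℝ} (hβ : 1 ≤ β) (ht : t ∈ Set.Ioo (0 : ℝ) 1)
    (hθ : θ ^ 2 ≤ 1) :
    (1 - 2 * (1 - t) * β) * θ ^ 2 + 2 * t * (1 - β) * θ - t * (2 - t) * (2 * β - 1) ≤ 0 := by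
  obtain ⟨ht0, ht1⟩ := ht
  have hθ1 : -1 ≤ θ := by nlinarith [sq_nonneg (θ + 1)]
  have hθ2 : θ ≤ 1 := by nlinarith [sq_nonneg (θ - 1)]
  rcases le_or_gt (2 * (1 - t) * β - 1) 0 with hconvex | hconcave
  · have hA : 0 ≤ 2 * β * (1 + 2 * t - t ^ 2) - (1 + 4 * t - t ^ 2) := by nlinarith
    have hB : 0 ≤ (1 - t ^ 2) * (2 * β - 1) := by nlinarith
    nlinarith [mul_nonneg (by linarith : (0 : ℝ) ≤ 1 + θ) hA,
      mul_nonneg (by linarith : (0 : ℝ) ≤ 1 - θ) hB,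
      mul_nonneg (neg_nonneg.2 hconvex) (by nlinarith : (0 : ℝ) ≤ 1 - θ ^ 2)]
  rcases le_or_gt (t * (β - 1)) (2 * (1 - t) * β - 1) with hvertex | hvertex
  · have hdisc : 0 ≤ (2 - t) * (2 * β - 1) * (2 * (1 - t) * β - 1) - t * (β - 1) ^ 2 := by
      nlinarith
    have hscaled : (2 * (1 - t) * β - 1) *
        ((1 - 2 * (1 - t) * β) * θ ^ 2 + 2 * t * (1 - β) * θ - t * (2 - t) * (2 * β - 1))
          ≤ 0 := by
      nlinarith [sq_nonneg ((2 * (1 - t) * β - 1) * θ + t * (β - 1)), mul_nonneg ht0.le hdisc]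
    by_contra! hpos
    nlinarith [mul_pos hconcave hpos]
  · have h1 : 0 ≤ 2 * t * (β - 1) - (2 * (1 - t) * β - 1) * (1 - θ) := by
      nlinarith [mul_nonneg hconcave.le (by linarith : (0 : ℝ) ≤ 1 + θ)]
    nlinarith [mul_nonneg (by linarith : (0 : ℝ) ≤ 1 + θ) h1]

section

variable {H : Type*} [NormedAddCommGroup H] [InnerProductSpace ℝ H]

lemma norm_add_smul_add_smul_sq (a r s : H) (c d : ℝ) :
    ‖a + c • r + d • s‖ ^ 2 = ‖a‖ ^ 2 + c ^ 2 * ‖r‖ ^ 2 + d ^ 2 * ‖s‖ ^ 2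
      + 2 * c * ⟪a, r⟫ + 2 * d * ⟪a, s⟫ + 2 * c * d * ⟪r, s⟫ := by
  simp only [← real_inner_self_eq_norm_sq, inner_add_left, inner_add_right,
    real_inner_smul_left, real_inner_smul_right, real_inner_comm a, real_inner_comm r s]
  ring

lemma norm_tkma_combination_sq_le {a r s : H} {β t θ : ℝ} (hβ : 1 ≤ β)
    (ht : t ∈ Set.Ioo (0 : ℝ) 1) (hr : r ≠ 0) (hθ : ⟪r, s⟫ = θ * ‖r‖ ^ 2)
    (har : β * ‖r‖ ^ 2 ≤ -⟪a, r⟫) (has : β * ‖s‖ ^ 2 ≤ -⟪a + r, s⟫) (hsr : ‖s‖ ≤ ‖r‖) :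
    ‖a + (1 + t * θ) • r + (1 - t) • s‖ ^ 2 + (1 - t) ^ 2 * (2 * β - 1) * ‖r‖ ^ 2
      ≤ ‖a‖ ^ 2 := by
  obtain ⟨ht0, ht1⟩ := ht
  have hR : 0 < ‖r‖ ^ 2 := by positivity
  have hSR : ‖s‖ ^ 2 ≤ ‖r‖ ^ 2 := pow_le_pow_left₀ (norm_nonneg s) hsr 2
  have hθS : θ ^ 2 * ‖r‖ ^ 2 ≤ ‖s‖ ^ 2 := by
    have hcs := real_inner_mul_inner_self_le r s
    rw [hθ, real_inner_self_eq_norm_sq, real_inner_self_eq_norm_sq] at hcs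
    nlinarith
  have hθ1 : θ ^ 2 ≤ 1 := by nlinarith
  have hc : 0 ≤ 1 + t * θ := by nlinarith [sq_nonneg (θ + 1)]
  have hq := tkma_quadratic_nonpos hβ ⟨ht0, ht1⟩ hθ1
  rw [inner_add_left, hθ] at has
  rw [norm_add_smul_add_smul_sq, hθ]
  nlinarith [mul_nonneg hc (by linarith : (0 : ℝ) ≤ -(β * ‖r‖ ^ 2) - ⟪a, r⟫),
    mul_nonneg (by linarith : (0 : ℝ) ≤ 1 - t)
      (by linarith : (0 : ℝ) ≤ -(β * ‖s‖ ^ 2) - (⟪a, s⟫ + θ * ‖r‖ ^ 2)),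
    mul_nonneg (by nlinarith : (0 : ℝ) ≤ 2 * (1 - t) * β - (1 - t) ^ 2) (sub_nonneg.2 hθS),
    mul_nonneg hR.le (neg_nonneg.2 hq)]

namespace AveragedNE

variable {α : ℝ} {T : H → H}

lemma nonexpansive (hT : AveragedNE α T) (hα0 : 0 ≤ α) (hα1 : α ≤ 1) : Nonexpansive T := by
  obtain ⟨N, hN, hTN⟩ := hT
  intro x y
  calc ‖T x - T y‖ = ‖(1 - α) • (x - y) + α • (N x - N y)‖ := by
        rw [hTN x, hTN y]; congr 1; module
    _ ≤ (1 - α) * ‖x - y‖ + α * ‖N x - N y‖ := by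
        refine (norm_add_le _ _).trans_eq ?_
        rw [norm_smul, norm_smul, Real.norm_of_nonneg (by linarith), Real.norm_of_nonneg hα0]
    _ ≤ (1 - α) * ‖x - y‖ + α * ‖x - y‖ := by gcongr; exact hN x y
    _ = ‖x - y‖ := by ring

/-- `I − T = α (I − N)`, and `I − N` is `1/2`-cocoercive for nonexpansive `N`. -/
lemma norm_sq_le_inner (hT : AveragedNE α T) (x y : H) :
    ‖(x - T x) - (y - T y)‖ ^ 2 ≤ 2 * α * ⟪(x - T x) - (y - T y), x - y⟫ := by
  obtain ⟨N, hN, hTN⟩ := hT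
  have hId : (x - T x) - (y - T y) = α • ((x - y) - (N x - N y)) := by
    rw [hTN x, hTN y]; module
  have hNxy : ‖N x - N y‖ ^ 2 ≤ ‖x - y‖ ^ 2 := pow_le_pow_left₀ (norm_nonneg _) (hN x y) 2
  rw [hId]
  generalize x - y = d, N x - N y = e at hNxy
  rw [norm_smul, mul_pow, Real.norm_eq_abs, sq_abs, real_inner_smul_left, norm_sub_sq_real,
    inner_sub_left, real_inner_self_eq_norm_sq, real_inner_comm]
  nlinarith [mul_nonneg (sq_nonneg α) (sub_nonneg.2 hNxy)]

lemma tkma_step_le (hT : AveragedNE α T) (hα : α ∈ Set.Ioc (0 : ℝ) (1 / 2)) {t : ℝ}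
    (ht : t ∈ Set.Ioo (0 : ℝ) 1) {x xhat : H} (hxhat : T xhat = xhat) (hx : T x ≠ x) {θ : ℝ}
    (hθ : θ = -⟪T x - x, T x - T (T x)⟫ / ‖T x - x‖ ^ 2) :
    ‖(1 - t) • T (T x) + t • (T x + θ • (T x - x)) - xhat‖ ^ 2
      + (1 - t) ^ 2 * (1 - α) / α * ‖T x - x‖ ^ 2 ≤ ‖x - xhat‖ ^ 2 := by
  obtain ⟨hα0, hα1⟩ := hα
  have hr : T x - x ≠ 0 := sub_ne_zero.2 hx
  have hinner : ⟪T x - x, T (T x) - T x⟫ = θ * ‖T x - x‖ ^ 2 := by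
    rw [hθ, ← neg_sub (T x) (T (T x)), inner_neg_right, neg_div, neg_mul,
      div_mul_cancel₀ _ (by positivity)]
  have har : 1 / (2 * α) * ‖T x - x‖ ^ 2 ≤ -⟪x - xhat, T x - x⟫ := by
    have h := hT.norm_sq_le_inner x xhat
    rw [hxhat, sub_self, sub_zero, ← neg_sub (T x) x, norm_neg, inner_neg_left,
      real_inner_comm] at h
    rw [div_mul_eq_mul_div, div_le_iff₀ (by positivity)]
    linarith
  have has : 1 / (2 * α) * ‖T (T x) - T x‖ ^ 2 ≤ -⟪x - xhat + (T x - x), T (T x) - T x⟫ := by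
    have h := hT.norm_sq_le_inner (T x) xhat
    rw [hxhat, sub_self, sub_zero, ← neg_sub (T (T x)) (T x), norm_neg, inner_neg_left,
      real_inner_comm] at h
    rw [div_mul_eq_mul_div, div_le_iff₀ (by positivity), sub_add_sub_cancel']
    linarith
  have hsr : ‖T (T x) - T x‖ ≤ ‖T x - x‖ := hT.nonexpansive hα0.le (by linarith) (T x) x
  have hβ : 1 ≤ 1 / (2 * α) := by rw [le_div_iff₀ (by positivity)]; linarith
  have key := norm_tkma_combination_sq_le hβ ht hr hinner har has hsr
  have hconst : 2 * (1 / (2 * α)) - 1 = (1 - α) / α := by field_simp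
  rw [hconst, ← mul_div_assoc] at key
  rwa [show (1 - t) • T (T x) + t • (T x + θ • (T x - x)) - xhat
    = x - xhat + (1 + t * θ) • (T x - x) + (1 - t) • (T (T x) - T x) by module]

end AveragedNE

end

theorem stmt_8_general {H : Type*} [NormedAddCommGroup H] [InnerProductSpace ℝ H]
    (α : ℝ) (hα : α ∈ Set.Ioc (0 : ℝ) (1/2))
    (T : H → H) (hT : AveragedNE α T)
    (hfix : ∃ z, T z = z)
    (t : ℝ) (ht : t ∈ Set.Ioo (0 : ℝ) 1)
    (x : ℕ → H) (θ : ℕ → ℝ)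
    (hTx : ∀ k, T (x k) ≠ x k)
    (hθ : ∀ k, θ k = -⟪T (x k) - x k, T (x k) - T (T (x k))⟫ / ‖T (x k) - x k‖ ^ 2)
    (hrec : ∀ k, x (k + 1) =
      (1 - t) • T (T (x k)) + t • (T (x k) + θ k • (T (x k) - x k))) :
    Summable (fun k => ‖T (x k) - x k‖ ^ 2) ∧
    ∀ xhat, T xhat = xhat →
      ((1 - t) ^ 2 * (1 - α) / α) * ∑' k, ‖T (x k) - x k‖ ^ 2 ≤ ‖x 0 - xhat‖ ^ 2 := by
  have hC : 0 < (1 - t) ^ 2 * (1 - α) / α := by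
    have : 0 < 1 - t := by linarith [ht.2]
    have : 0 < 1 - α := by linarith [hα.2]
    have := hα.1
    positivity
  have descent : ∀ xhat, T xhat = xhat →
      Summable (fun k => (1 - t) ^ 2 * (1 - α) / α * ‖T (x k) - x k‖ ^ 2) ∧
        ∑' k, (1 - t) ^ 2 * (1 - α) / α * ‖T (x k) - x k‖ ^ 2 ≤ ‖x 0 - xhat‖ ^ 2 :=
    fun xhat hxhat => summable_and_tsum_le_of_succ_add_le (u := fun k => ‖x k - xhat‖ ^ 2)
      (fun _ => sq_nonneg _) (fun _ => mul_nonneg hC.le (sq_nonneg _)) fun k => by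
        rw [hrec k]; exact hT.tkma_step_le hα ht hxhat (hTx k) (hθ k)
  obtain ⟨z, hz⟩ := hfix
  refine ⟨(summable_mul_left_iff hC.ne').mp (descent z hz).1, fun xhat hxhat => ?_⟩
  rw [← tsum_mul_left]
  exact (descent xhat hxhat).2

theorem stmt_8 {H : Type*} [NormedAddCommGroup H] [InnerProductSpace ℝ H]
    [CompleteSpace H]
    (α : ℝ) (hα : α ∈ Set.Ioc (0 : ℝ) (1/2))
    (T : H → H) (hT : AveragedNE α T)
    (hfix : ∃ z, T z = z)
    (t : ℝ) (ht : t ∈ Set.Ioo (0 : ℝ) 1)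
    (x : ℕ → H) (θ : ℕ → ℝ)
    (hTx : ∀ k, T (x k) ≠ x k)
    (hθ : ∀ k, θ k = -⟪T (x k) - x k, T (x k) - T (T (x k))⟫ / ‖T (x k) - x k‖ ^ 2)
    (hrec : ∀ k, x (k + 1) =
      (1 - t) • T (T (x k)) + t • (T (x k) + θ k • (T (x k) - x k))) :
    Summable (fun k => ‖T (x k) - x k‖ ^ 2) ∧
    ∀ xhat, T xhat = xhat →
      ((1 - t) ^ 2 * (1 - α) / α) * ∑' k, ‖T (x k) - x k‖ ^ 2 ≤ ‖x 0 - xhat‖ ^ 2 :=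
  stmt_8_general α hα T hT hfix t ht x θ hTx hθ hrec
end

section
/- Let D be a finite-dimensional real inner product space, α ∈ (0, 1/2], T : D → D an α-averaged nonexpansive operator with Fix(T) ≠ ∅, t ∈ (0,1), and let (x^k) be a TKMA sequence for T: x^{k+1} = (1−t)T²x^k + t T^{θ_k}x^k with θ_k := −⟨Tx^k − x^k, Tx^k − T²x^k⟩ / ‖Tx^k − x^k‖² and Tx^k ≠ x^k for all k. Then (x^k) converges to some fixed point of T. -/
open RealInnerProductSpace Filter Topology

/-!
For `α ≤ 1/2` the reflection `2T - I = (1 - 2α)I + 2αN` is nonexpansive, i.e. `T` is firmly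
nonexpansive. For a fixed point `z` this gives `⟪T a - z, T a - a⟫ ≤ 0`, whence every relaxation
`T a + θ (T a - a)` with `|θ| ≤ 1` is at least as close to `z` as `a`, and
`‖T a - z‖² ≤ ‖a - z‖² - ‖T a - a‖²`. By Cauchy–Schwarz and nonexpansiveness `|θ_k| ≤ 1`, so by
convexity of `‖·‖²` the TKMA sequence is Fejér monotone with respect to `Fix T`, each step
decreasing `‖x^k - z‖²` by at least `(1 - t) ‖T x^k - x^k‖²`. Hence the residuals vanish, a
cluster point (which exists in finite dimension) is fixed by continuity, and Fejér monotonicity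
makes it the limit of the whole sequence.
-/

section FirmlyNonexpansive

variable {H : Type*} [NormedAddCommGroup H] [InnerProductSpace ℝ H]

def FirmlyNonexpansive (T : H → H) : Prop :=
  ∀ x y, ‖T x - T y‖ ^ 2 ≤ ⟪T x - T y, x - y⟫

theorem Nonexpansive.lipschitzWith {T : H → H} (hT : Nonexpansive T) : LipschitzWith 1 T :=
  LipschitzWith.of_dist_le_mul fun a b => by simpa [dist_eq_norm] using hT a b

theorem Nonexpansive.abs_inner_div_norm_sq_le_one {T : H → H} (hT : Nonexpansive T) (a : H) :
    |⟪T a - a, T a - T (T a)⟫ / ‖T a - a‖ ^ 2| ≤ 1 := by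
  rw [abs_div, abs_sq]
  refine div_le_one_of_le₀ ?_ (sq_nonneg _)
  calc |⟪T a - a, T a - T (T a)⟫| ≤ ‖T a - a‖ * ‖T a - T (T a)‖ := abs_real_inner_le_norm _ _
    _ ≤ ‖T a - a‖ * ‖T a - a‖ := by
        gcongr
        exact (hT a (T a)).trans_eq (norm_sub_rev _ _)
    _ = ‖T a - a‖ ^ 2 := (sq _).symm

theorem AveragedNE.nonexpansive_reflection {α : ℝ} {T : H → H} (hT : AveragedNE α T)
    (h0 : 0 ≤ α) (h1 : α ≤ 1 / 2) : Nonexpansive fun x => (2 : ℝ) • T x - x := by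
  obtain ⟨N, hN, hTN⟩ := hT
  intro a b
  have e : ((2 : ℝ) • T a - a) - ((2 : ℝ) • T b - b)
      = (1 - 2 * α) • (a - b) + (2 * α) • (N a - N b) := by
    rw [hTN a, hTN b]; module
  calc ‖((2 : ℝ) • T a - a) - ((2 : ℝ) • T b - b)‖
      ≤ (1 - 2 * α) * ‖a - b‖ + 2 * α * ‖N a - N b‖ := by
        rw [e, ← norm_smul_of_nonneg (by linarith), ← norm_smul_of_nonneg (by linarith)]
        exact norm_add_le _ _
    _ ≤ (1 - 2 * α) * ‖a - b‖ + 2 * α * ‖a - b‖ := by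
        have := hN a b
        gcongr
    _ = ‖a - b‖ := by ring

theorem firmlyNonexpansive_of_nonexpansive_reflection {T : H → H}
    (hT : Nonexpansive fun x => (2 : ℝ) • T x - x) : FirmlyNonexpansive T := by
  intro a b
  have h : ‖(2 : ℝ) • (T a - T b) - (a - b)‖ ≤ ‖a - b‖ := by
    convert hT a b using 2; module
  have hsq := pow_le_pow_left₀ (norm_nonneg _) h 2
  rw [norm_sub_sq_real, norm_smul, real_inner_smul_left, Real.norm_two] at hsq
  nlinarith

theorem FirmlyNonexpansive.nonexpansive {T : H → H} (hT : FirmlyNonexpansive T) :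
    Nonexpansive T := by
  intro a b
  have h := (hT a b).trans (real_inner_le_norm _ _)
  rcases (norm_nonneg (T a - T b)).eq_or_lt with h0 | h0
  · exact h0 ▸ norm_nonneg _
  · exact le_of_mul_le_mul_left (by rwa [sq] at h) h0

section FixedPoint

variable {T : H → H} {z : H}

theorem FirmlyNonexpansive.inner_sub_fixed_le_zero (hT : FirmlyNonexpansive T) (hz : T z = z)
    (a : H) : ⟪T a - z, T a - a⟫ ≤ 0 := by
  have h := hT a z
  rw [hz] at h
  rw [show T a - a = (T a - z) - (a - z) by abel, inner_sub_right, real_inner_self_eq_norm_sq]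
  linarith

theorem FirmlyNonexpansive.norm_relaxed_sub_fixed_sq_le (hT : FirmlyNonexpansive T)
    (hz : T z = z) (a : H) {θ : ℝ} (hθ : -1 ≤ θ) :
    ‖T a + θ • (T a - a) - z‖ ^ 2 ≤ ‖a - z‖ ^ 2 - (1 - θ ^ 2) * ‖T a - a‖ ^ 2 := by
  have hinner := hT.inner_sub_fixed_le_zero hz a
  rw [show T a + θ • (T a - a) - z = (T a - z) + θ • (T a - a) by abel,
    show a - z = (T a - z) - (T a - a) by abel, norm_add_sq_real (T a - z),
    norm_sub_sq_real (T a - z), real_inner_smul_right, norm_smul, Real.norm_eq_abs, mul_pow,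
    sq_abs]
  nlinarith [mul_nonneg (by linarith : 0 ≤ 1 + θ) (neg_nonneg.2 hinner)]

theorem FirmlyNonexpansive.norm_tkma_step_sub_fixed_sq_le (hT : FirmlyNonexpansive T)
    (hz : T z = z) (a : H) {t θ : ℝ} (ht0 : 0 ≤ t) (ht1 : t ≤ 1) (hθ : |θ| ≤ 1) :
    ‖(1 - t) • T (T a) + t • (T a + θ • (T a - a)) - z‖ ^ 2
      ≤ ‖a - z‖ ^ 2 - (1 - t) * ‖T a - a‖ ^ 2 := by
  have hquasi : ‖T a - z‖ ^ 2 ≤ ‖a - z‖ ^ 2 - ‖T a - a‖ ^ 2 := by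
    simpa using hT.norm_relaxed_sub_fixed_sq_le hz a (θ := 0) (by norm_num)
  have hrelax : ‖T a + θ • (T a - a) - z‖ ^ 2 ≤ ‖a - z‖ ^ 2 := by
    have := hT.norm_relaxed_sub_fixed_sq_le hz a (neg_le_of_abs_le hθ)
    have : 0 ≤ (1 - θ ^ 2) * ‖T a - a‖ ^ 2 :=
      mul_nonneg (sub_nonneg.2 ((sq_le_one_iff_abs_le_one θ).2 hθ)) (sq_nonneg _)
    linarith
  have hTT : ‖T (T a) - z‖ ^ 2 ≤ ‖T a - z‖ ^ 2 := by
    have := hT.nonexpansive (T a) z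
    rw [hz] at this
    gcongr
  have hconv := (convexOn_univ_norm.pow (fun _ _ => norm_nonneg _) 2).2 (Set.mem_univ _)
    (Set.mem_univ _) (sub_nonneg.2 ht1) ht0 (by ring)
    (x := T (T a) - z) (y := T a + θ • (T a - a) - z)
  simp only [Pi.pow_apply, smul_eq_mul] at hconv
  calc ‖(1 - t) • T (T a) + t • (T a + θ • (T a - a)) - z‖ ^ 2
      = ‖(1 - t) • (T (T a) - z) + t • (T a + θ • (T a - a) - z)‖ ^ 2 := by
        congr 2; module
    _ ≤ (1 - t) * ‖T (T a) - z‖ ^ 2 + t * ‖T a + θ • (T a - a) - z‖ ^ 2 := hconv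
    _ ≤ (1 - t) * (‖a - z‖ ^ 2 - ‖T a - a‖ ^ 2) + t * ‖a - z‖ ^ 2 := by
        gcongr
        exact hTT.trans hquasi
    _ = ‖a - z‖ ^ 2 - (1 - t) * ‖T a - a‖ ^ 2 := by ring

end FixedPoint

end FirmlyNonexpansive

theorem tendsto_zero_of_le_sub_mul {S r : ℕ → ℝ} {c : ℝ} (hc : 0 < c) (hS : ∀ k, 0 ≤ S k)
    (hr : ∀ k, 0 ≤ r k) (hdec : ∀ k, S (k + 1) ≤ S k - c * r k) :
    Tendsto r atTop (𝓝 0) := by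
  have hanti : Antitone S :=
    antitone_nat_of_succ_le fun k => (hdec k).trans (sub_le_self _ (mul_nonneg hc.le (hr k)))
  have hlim := tendsto_atTop_ciInf hanti ⟨0, by rintro _ ⟨k, rfl⟩; exact hS k⟩
  have hdiff : Tendsto (fun k => (S k - S (k + 1)) / c) atTop (𝓝 0) := by
    simpa using (hlim.sub (hlim.comp (tendsto_add_atTop_nat 1))).div_const c
  refine squeeze_zero hr (fun k => ?_) hdiff
  rw [le_div_iff₀ hc, mul_comm]
  linarith [hdec k]

section Fejer

variable {X : Type*} [MetricSpace X]

theorem tendsto_of_antitone_dist_of_mem_closure_range {x : ℕ → X} {q : X}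
    (hanti : Antitone fun k => dist (x k) q) (hq : q ∈ closure (Set.range x)) :
    Tendsto x atTop (𝓝 q) := by
  rw [Metric.tendsto_atTop]
  intro ε hε
  obtain ⟨_, ⟨n, rfl⟩, hn⟩ := Metric.mem_closure_iff.1 hq ε hε
  exact ⟨n, fun k hk => (hanti hk).trans_lt (by rwa [dist_comm] at hn)⟩

theorem exists_fixed_tendsto_of_fejer [ProperSpace X] {T : X → X} (hT : Continuous T)
    {x : ℕ → X} {z : X} (hz : T z = z)
    (hfejer : ∀ z, T z = z → Antitone fun k => dist (x k) z)
    (hres : Tendsto (fun k => dist (x k) (T (x k))) atTop (𝓝 0)) :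
    ∃ q, T q = q ∧ Tendsto x atTop (𝓝 q) := by
  obtain ⟨q, -, φ, hφ, hxφ⟩ := tendsto_subseq_of_bounded Metric.isBounded_closedBall
    fun k => Metric.mem_closedBall.2 (hfejer z hz (Nat.zero_le k))
  have hq : T q = q :=
    tendsto_nhds_unique ((hT.tendsto q).comp hxφ) (hxφ.congr_dist (hres.comp hφ.tendsto_atTop))
  exact ⟨q, hq, tendsto_of_antitone_dist_of_mem_closure_range (hfejer q hq)
    (mem_closure_of_tendsto hxφ (Eventually.of_forall fun n => Set.mem_range_self _))⟩

end Fejer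

theorem stmt_9_general {D : Type*} [NormedAddCommGroup D] [InnerProductSpace ℝ D]
    [FiniteDimensional ℝ D]
    (α : ℝ) (hα : α ∈ Set.Ioc (0 : ℝ) (1/2))
    (T : D → D) (hT : AveragedNE α T)
    (hfix : ∃ z, T z = z)
    (t : ℝ) (ht : t ∈ Set.Ioo (0 : ℝ) 1)
    (x : ℕ → D) (θ : ℕ → ℝ)
    (hθ : ∀ k, θ k = -⟪T (x k) - x k, T (x k) - T (T (x k))⟫ / ‖T (x k) - x k‖ ^ 2)
    (hrec : ∀ k, x (k + 1) =
      (1 - t) • T (T (x k)) + t • (T (x k) + θ k • (T (x k) - x k))) :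
    ∃ q, T q = q ∧ Tendsto x atTop (nhds q) := by
  have hfirm : FirmlyNonexpansive T :=
    firmlyNonexpansive_of_nonexpansive_reflection (hT.nonexpansive_reflection hα.1.le hα.2)
  have hstep : ∀ z, T z = z → ∀ k,
      dist (x (k + 1)) z ^ 2 ≤ dist (x k) z ^ 2 - (1 - t) * dist (x k) (T (x k)) ^ 2 := by
    intro z hz k
    have hθk : |θ k| ≤ 1 := by
      rw [hθ k, neg_div, abs_neg]
      exact hfirm.nonexpansive.abs_inner_div_norm_sq_le_one (x k)
    rw [dist_eq_norm, dist_eq_norm, dist_eq_norm, norm_sub_rev (x k) (T (x k)), hrec k]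
    exact hfirm.norm_tkma_step_sub_fixed_sq_le hz (x k) ht.1.le ht.2.le hθk
  have hfejer : ∀ z, T z = z → Antitone fun k => dist (x k) z := fun z hz =>
    antitone_nat_of_succ_le fun k => (pow_le_pow_iff_left₀ dist_nonneg dist_nonneg two_ne_zero).1 <|
      (hstep z hz k).trans (sub_le_self _ (mul_nonneg (sub_nonneg.2 ht.2.le) (sq_nonneg _)))
  obtain ⟨z, hz⟩ := hfix
  have hres : Tendsto (fun k => dist (x k) (T (x k))) atTop (𝓝 0) := by
    simpa [Real.sqrt_sq dist_nonneg] using (tendsto_zero_of_le_sub_mul (sub_pos.2 ht.2)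
      (fun k => sq_nonneg (dist (x k) z)) (fun k => sq_nonneg _) (hstep z hz)).sqrt
  exact exists_fixed_tendsto_of_fejer hfirm.nonexpansive.lipschitzWith.continuous hz hfejer hres

theorem stmt_9 {D : Type*} [NormedAddCommGroup D] [InnerProductSpace ℝ D]
    [FiniteDimensional ℝ D]
    (α : ℝ) (hα : α ∈ Set.Ioc (0 : ℝ) (1/2))
    (T : D → D) (hT : AveragedNE α T)
    (hfix : ∃ z, T z = z)
    (t : ℝ) (ht : t ∈ Set.Ioo (0 : ℝ) 1)
    (x : ℕ → D) (θ : ℕ → ℝ)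
    (hTx : ∀ k, T (x k) ≠ x k)
    (hθ : ∀ k, θ k = -⟪T (x k) - x k, T (x k) - T (T (x k))⟫ / ‖T (x k) - x k‖ ^ 2)
    (hrec : ∀ k, x (k + 1) =
      (1 - t) • T (T (x k)) + t • (T (x k) + θ k • (T (x k) - x k))) :
    ∃ q, T q = q ∧ Tendsto x atTop (nhds q) :=
  stmt_9_general α hα T hT hfix t ht x θ hθ hrec
end

section
/- Let (a_k) and (b_k) be nonnegative real sequences with ∑_{k=0}^∞ a_k b_k < +∞ and ∑_{k=0}^∞ a_k = +∞, and let (c_k) be a positive real sequence with c_k → 1 and such that the partial sums ∑_{k=0}^n ln c_k are uniformly bounded in absolute value. If b_{k+1} ≤ c_k b_k for all k ∈ ℕ, then A_k b_k → 0 as k → ∞, where A_k := ∑_{i=0}^k a_i; i.e., b_k = o(1/A_k). -/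
/-! The hypotheses on `c` make `b` quasi-decreasing: `b n ≤ K b m` for `m ≤ n`, with
`K = exp (2M)`, since `∏_{m ≤ k < n} c k = exp (∑_{m ≤ k < n} log (c k))` and that sum is a
difference of two partial sums bounded by `M`. As `∑ a_k = ∞` while `∑ a_k b_k < ∞`, some `b m` is
arbitrarily small, so quasi-monotonicity gives `b → 0`. Finally, splitting `A_n` at `m`,
`A_n b_n ≤ A_m b_n + K ∑_{m < i ≤ n} a_i b_i`, where the first term tends to `0` for fixed `m` and
the second is at most `K` times the tail of `∑ a_k b_k` after `m`. -/

open Filter Topology Finset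

lemma le_prod_Ico_mul_of_le_mul {R : Type*} [CommSemiring R] [PartialOrder R] [IsOrderedRing R]
    {b c : ℕ → R} (hc : ∀ k, 0 ≤ c k) (hbc : ∀ k, b (k + 1) ≤ c k * b k)
    {m n : ℕ} (hmn : m ≤ n) : b n ≤ (∏ k ∈ Ico m n, c k) * b m := by
  induction n, hmn using Nat.le_induction with
  | base => simp
  | succ n hmn ih =>
    calc b (n + 1) ≤ c n * b n := hbc n
      _ ≤ c n * ((∏ k ∈ Ico m n, c k) * b m) := mul_le_mul_of_nonneg_left ih (hc n)
      _ = (∏ k ∈ Ico m (n + 1), c k) * b m := by rw [prod_Ico_succ_top hmn]; ring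

lemma prod_Ico_le_exp_of_abs_sum_log_le {c : ℕ → ℝ} (hc : ∀ k, 0 < c k) {M : ℝ}
    (hM : ∀ n, |∑ k ∈ range n, Real.log (c k)| ≤ M) {m n : ℕ} (hmn : m ≤ n) :
    ∏ k ∈ Ico m n, c k ≤ Real.exp (2 * M) := by
  have hexp : ∏ k ∈ Ico m n, c k = Real.exp (∑ k ∈ Ico m n, Real.log (c k)) := by
    rw [Real.exp_sum]
    exact prod_congr rfl fun k _ => (Real.exp_log (hc k)).symm
  rw [hexp, Real.exp_le_exp, sum_Ico_eq_sub _ hmn]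
  linarith [(abs_le.1 (hM n)).2, (abs_le.1 (hM m)).1]

lemma exists_lt_of_summable_mul_of_not_summable {a b : ℕ → ℝ} (ha : ∀ k, 0 ≤ a k)
    (hab : Summable (fun k => a k * b k)) (hna : ¬ Summable a) {ε : ℝ} (hε : 0 < ε) :
    ∃ m, b m < ε := by
  by_contra! hbε
  refine hna (Summable.of_nonneg_of_le ha (fun k => ?_) (hab.div_const ε))
  rw [le_div_iff₀ hε]
  exact mul_le_mul_of_nonneg_left (hbε k) (ha k)

lemma tendsto_zero_of_le_mul_of_exists_lt {b : ℕ → ℝ} (hb : ∀ k, 0 ≤ b k) {K : ℝ}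
    (hK0 : 0 ≤ K) (hK : ∀ m n, m ≤ n → b n ≤ K * b m) (hsmall : ∀ ε > 0, ∃ m, b m < ε) :
    Tendsto b atTop (𝓝 0) := by
  refine tendsto_order.2 ⟨fun ε hε => Eventually.of_forall fun n => hε.trans_le (hb n),
    fun ε hε => ?_⟩
  obtain ⟨m, hm⟩ := hsmall (ε / (K + 1)) (by positivity)
  filter_upwards [eventually_ge_atTop m] with n hn
  calc b n ≤ K * b m := hK m n hn
    _ ≤ K * (ε / (K + 1)) := mul_le_mul_of_nonneg_left hm.le hK0
    _ < ε := by rw [mul_div_assoc', div_lt_iff₀ (by positivity)]; linarith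

lemma sum_Ico_le_tsum_sub_sum_range {f : ℕ → ℝ} (hf : ∀ k, 0 ≤ f k) (hsum : Summable f)
    {m n : ℕ} (hmn : m ≤ n) : ∑ i ∈ Ico m n, f i ≤ ∑' k, f k - ∑ i ∈ range m, f i := by
  have := hsum.sum_le_tsum (range n) fun i _ => hf i
  rw [← sum_range_add_sum_Ico f hmn] at this
  linarith

lemma sum_range_mul_le_of_le_mul {a b : ℕ → ℝ} (ha : ∀ k, 0 ≤ a k) (hb : ∀ k, 0 ≤ b k)
    (hab : Summable (fun k => a k * b k)) {K : ℝ} (hK0 : 0 ≤ K)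
    (hK : ∀ m n, m ≤ n → b n ≤ K * b m) {m n : ℕ} (hmn : m ≤ n) :
    (∑ i ∈ range (n + 1), a i) * b n ≤ (∑ i ∈ range (m + 1), a i) * b n +
      K * (∑' k, a k * b k - ∑ i ∈ range (m + 1), a i * b i) := by
  have hmn' : m + 1 ≤ n + 1 := Nat.add_le_add_right hmn 1
  have htail : ∑ i ∈ Ico (m + 1) (n + 1), a i * b n ≤
      K * ∑ i ∈ Ico (m + 1) (n + 1), a i * b i := by
    rw [mul_sum]
    refine sum_le_sum fun i hi => ?_
    calc a i * b n ≤ a i * (K * b i) :=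
          mul_le_mul_of_nonneg_left (hK i n (Nat.lt_succ_iff.1 (mem_Ico.1 hi).2)) (ha i)
      _ = K * (a i * b i) := by ring
  have hsum := sum_Ico_le_tsum_sub_sum_range (fun k => mul_nonneg (ha k) (hb k)) hab hmn'
  rw [← sum_range_add_sum_Ico a hmn', add_mul, sum_mul (Ico (m + 1) (n + 1))]
  linarith [mul_le_mul_of_nonneg_left hsum hK0]

lemma tendsto_sum_range_mul_of_le_mul {a b : ℕ → ℝ} (ha : ∀ k, 0 ≤ a k) (hb : ∀ k, 0 ≤ b k)
    (hab : Summable (fun k => a k * b k))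
    (hadiv : Tendsto (fun n => ∑ i ∈ range (n + 1), a i) atTop atTop)
    {K : ℝ} (hK0 : 0 ≤ K) (hK : ∀ m n, m ≤ n → b n ≤ K * b m) :
    Tendsto (fun n => (∑ i ∈ range (n + 1), a i) * b n) atTop (𝓝 0) := by
  have hna : ¬ Summable a := (not_summable_iff_tendsto_nat_atTop_of_nonneg ha).2
    ((tendsto_add_atTop_iff_nat 1).1 hadiv)
  have hb0 : Tendsto b atTop (𝓝 0) := tendsto_zero_of_le_mul_of_exists_lt hb hK0 hK
    fun ε hε => exists_lt_of_summable_mul_of_not_summable ha hab hna hε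
  have htail : Tendsto (fun m => K * (∑' k, a k * b k - ∑ i ∈ range (m + 1), a i * b i))
      atTop (𝓝 0) := by
    simpa using ((tendsto_add_atTop_iff_nat 1).2 hab.hasSum.tendsto_sum_nat).const_sub
      (∑' k, a k * b k) |>.const_mul K
  refine tendsto_order.2 ⟨fun ε hε => Eventually.of_forall fun n =>
    hε.trans_le (mul_nonneg (sum_nonneg fun i _ => ha i) (hb n)), fun ε hε => ?_⟩
  obtain ⟨m, hm⟩ := (htail.eventually (gt_mem_nhds (half_pos hε))).exists
  have hhead : Tendsto (fun n => (∑ i ∈ range (m + 1), a i) * b n) atTop (𝓝 0) := by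
    simpa using hb0.const_mul (∑ i ∈ range (m + 1), a i)
  filter_upwards [hhead.eventually (gt_mem_nhds (half_pos hε)), eventually_ge_atTop m]
    with n hn hmn
  linarith [sum_range_mul_le_of_le_mul ha hb hab hK0 hK hmn]

theorem stmt_10_general (a b c : ℕ → ℝ)
    (ha : ∀ k, 0 ≤ a k) (hb : ∀ k, 0 ≤ b k)
    (hab : Summable (fun k => a k * b k))
    (hadiv : Tendsto (fun n => ∑ i ∈ Finset.range (n + 1), a i) atTop atTop)
    (hc : ∀ k, 0 < c k)
    (hlog : ∃ M : ℝ, ∀ n, |∑ k ∈ Finset.range (n + 1), Real.log (c k)| ≤ M)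
    (hbc : ∀ k, b (k + 1) ≤ c k * b k) :
    Tendsto (fun k => (∑ i ∈ Finset.range (k + 1), a i) * b k) atTop (nhds 0) := by
  obtain ⟨M, hM⟩ := hlog
  have hM' : ∀ n, |∑ k ∈ range n, Real.log (c k)| ≤ M
    | 0 => by simpa using (abs_nonneg _).trans (hM 0)
    | n + 1 => hM n
  refine tendsto_sum_range_mul_of_le_mul ha hb hab hadiv (Real.exp_pos (2 * M)).le fun m n hmn => ?_
  calc b n ≤ (∏ k ∈ Ico m n, c k) * b m := le_prod_Ico_mul_of_le_mul (fun k => (hc k).le) hbc hmn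
    _ ≤ Real.exp (2 * M) * b m :=
      mul_le_mul_of_nonneg_right (prod_Ico_le_exp_of_abs_sum_log_le hc hM' hmn) (hb m)

theorem stmt_10 (a b c : ℕ → ℝ)
    (ha : ∀ k, 0 ≤ a k) (hb : ∀ k, 0 ≤ b k)
    (hab : Summable (fun k => a k * b k))
    (hadiv : Tendsto (fun n => ∑ i ∈ Finset.range (n + 1), a i) atTop atTop)
    (hc : ∀ k, 0 < c k)
    (hc1 : Tendsto c atTop (nhds 1))
    (hlog : ∃ M : ℝ, ∀ n, |∑ k ∈ Finset.range (n + 1), Real.log (c k)| ≤ M)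
    (hbc : ∀ k, b (k + 1) ≤ c k * b k) :
    Tendsto (fun k => (∑ i ∈ Finset.range (k + 1), a i) * b k) atTop (nhds 0) :=
  stmt_10_general a b c ha hb hab hadiv hc hlog hbc
end

section
/- Let H be a real Hilbert space, α ∈ (0, 1/2], T : H → H an α-averaged nonexpansive operator with Fix(T) ≠ ∅, t ∈ (0,1), and let (x^k) be a TKMA sequence for T: x^{k+1} = (1−t)T²x^k + t T^{θ_k}x^k with θ_k := −⟨Tx^k − x^k, Tx^k − T²x^k⟩ / ‖Tx^k − x^k‖² and Tx^k ≠ x^k for all k. If ∑_{k=0}^∞ |θ_{k+1} − θ_k| < +∞, then √k · ‖x^{k+1} − x^k‖ → 0 as k → ∞; i.e., ‖x^{k+1} − x^k‖ = o(1/√k). -/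
open RealInnerProductSpace Filter Topology

lemma combo_sq {H : Type*} [NormedAddCommGroup H] [InnerProductSpace ℝ H]
    (γ : ℝ) (u v : H) :
    ‖(1 - γ) • u + γ • v‖ ^ 2
      = (1 - γ) * ‖u‖ ^ 2 + γ * ‖v‖ ^ 2 - γ * (1 - γ) * ‖u - v‖ ^ 2 := by
  simp only [← real_inner_self_eq_norm_sq, inner_add_add_self, inner_sub_sub_self,
    real_inner_smul_left, real_inner_smul_right, real_inner_comm u v]
  ring

lemma key_ineq {H : Type*} [NormedAddCommGroup H] [InnerProductSpace ℝ H]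
    (γ γs c₁ c₂ : ℝ) (u v₁ v₂ d : H)
    (hc₁ : 0 ≤ c₁) (hc₂ : 0 ≤ c₂) (hγ : γ = c₁ + c₂) (hγ0 : 0 < γ)
    (hγs : γ ≤ γs) (hγs1 : γs < 1)
    (hv₁ : ‖v₁‖ ≤ ‖u‖) (hv₂ : ‖v₂‖ ≤ ‖u‖)
    (hd : d = (1 - γ) • u + c₁ • v₁ + c₂ • v₂) :
    ‖d‖ ^ 2 + ((1 - γs) / γs) * ‖d - u‖ ^ 2 ≤ ‖u‖ ^ 2 := by
  have hγs0 : 0 < γs := lt_of_lt_of_le hγ0 hγs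
  obtain ⟨v, hv⟩ : ∃ v : H, v = γ⁻¹ • (c₁ • v₁ + c₂ • v₂) := ⟨_, rfl⟩
  have hvnorm : ‖v‖ ≤ ‖u‖ := by
    have h1 : ‖c₁ • v₁ + c₂ • v₂‖ ≤ γ * ‖u‖ := by
      calc ‖c₁ • v₁ + c₂ • v₂‖ ≤ ‖c₁ • v₁‖ + ‖c₂ • v₂‖ := norm_add_le _ _
        _ = c₁ * ‖v₁‖ + c₂ * ‖v₂‖ := by
            rw [norm_smul, norm_smul, Real.norm_eq_abs, Real.norm_eq_abs,
              abs_of_nonneg hc₁, abs_of_nonneg hc₂]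
        _ ≤ c₁ * ‖u‖ + c₂ * ‖u‖ := by gcongr
        _ = γ * ‖u‖ := by rw [hγ]; ring
    calc ‖v‖ = γ⁻¹ * ‖c₁ • v₁ + c₂ • v₂‖ := by
          rw [hv, norm_smul, Real.norm_eq_abs, abs_of_nonneg (inv_nonneg.2 hγ0.le)]
      _ ≤ γ⁻¹ * (γ * ‖u‖) := by gcongr
      _ = ‖u‖ := by field_simp
  have hd' : d = (1 - γ) • u + γ • v := by
    rw [hd, hv, smul_smul, mul_inv_cancel₀ hγ0.ne', one_smul, add_assoc]
  have hdu : d - u = γ • (v - u) := by rw [hd']; module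
  rw [hdu, hd', combo_sq, norm_smul, Real.norm_eq_abs, abs_of_nonneg hγ0.le,
    mul_pow, norm_sub_rev v u]
  have hB : ‖v‖ ^ 2 ≤ ‖u‖ ^ 2 := pow_le_pow_left₀ (norm_nonneg v) hvnorm 2
  have hkey : (1 - γs) / γs * γ ^ 2 ≤ γ * (1 - γ) := by
    rw [div_mul_eq_mul_div, div_le_iff₀ hγs0]
    nlinarith
  nlinarith [sq_nonneg ‖u - v‖, mul_le_mul_of_nonneg_right hkey (sq_nonneg ‖u - v‖)]

lemma sq_decay {b : ℕ → ℝ} (hb0 : ∀ k, 0 ≤ b k) (hmono : ∀ k, b (k + 1) ≤ b k)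
    (hsum : Summable (fun k => b k ^ 2)) :
    Tendsto (fun k : ℕ => Real.sqrt k * b k) atTop (nhds 0) := by
  have hanti : Antitone b := antitone_nat_of_succ_le hmono
  set tail : ℕ → ℝ := fun m => ∑' j : ℕ, b (j + m) ^ 2 with htail
  have htail0 : ∀ m, 0 ≤ tail m := fun m =>
    tsum_nonneg (fun j => sq_nonneg _)
  have hkb : ∀ k : ℕ, (k : ℝ) * b k ^ 2 ≤ 2 * tail (k / 2) := by
    intro k
    have hsum' : Summable (fun j => b (j + k / 2) ^ 2) :=
      (summable_nat_add_iff (k / 2)).2 hsum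
    have h1 : ((k - k / 2 : ℕ) : ℝ) * b k ^ 2 ≤ ∑ j ∈ Finset.Ico (k / 2) k, b j ^ 2 := by
      have := Finset.card_nsmul_le_sum (Finset.Ico (k / 2) k) (fun j => b j ^ 2)
        (b k ^ 2) (fun j hj => by
          have hjk : j ≤ k := (Finset.mem_Ico.1 hj).2.le
          exact pow_le_pow_left₀ (hb0 k) (hanti hjk) 2)
      simpa [Nat.card_Ico, nsmul_eq_mul] using this
    have h2 : ∑ j ∈ Finset.Ico (k / 2) k, b j ^ 2 ≤ tail (k / 2) := by
      rw [Finset.sum_Ico_eq_sum_range]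
      calc ∑ j ∈ Finset.range (k - k / 2), b (k / 2 + j) ^ 2
          = ∑ j ∈ Finset.range (k - k / 2), b (j + k / 2) ^ 2 := by
            apply Finset.sum_congr rfl; intro j _; rw [add_comm]
        _ ≤ tail (k / 2) := Summable.sum_le_tsum _ (fun i _ => sq_nonneg _) hsum'
    have h3 : (k : ℝ) ≤ 2 * ((k - k / 2 : ℕ) : ℝ) := by
      have : k ≤ 2 * (k - k / 2) := by omega
      exact_mod_cast this
    calc (k : ℝ) * b k ^ 2 ≤ (2 * ((k - k / 2 : ℕ) : ℝ)) * b k ^ 2 :=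
          mul_le_mul_of_nonneg_right h3 (sq_nonneg _)
      _ = 2 * (((k - k / 2 : ℕ) : ℝ) * b k ^ 2) := by ring
      _ ≤ 2 * tail (k / 2) := by linarith
  have htt : Tendsto (fun k : ℕ => tail (k / 2)) atTop (nhds 0) := by
    have h1 : Tendsto tail atTop (nhds 0) := by
      rw [htail]; exact tendsto_sum_nat_add (fun j => b j ^ 2)
    exact h1.comp (Filter.tendsto_atTop_atTop.2 fun n => ⟨2 * n, fun a ha => by omega⟩)
  have htt2 := htt.const_mul (2:ℝ)
  rw [mul_zero] at htt2
  have hkb0 : Tendsto (fun k : ℕ => (k : ℝ) * b k ^ 2) atTop (nhds 0) :=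
    squeeze_zero (fun k => mul_nonneg (Nat.cast_nonneg k) (sq_nonneg _)) hkb htt2
  have := hkb0.sqrt
  rw [Real.sqrt_zero] at this
  refine this.congr fun k => ?_
  rw [Real.sqrt_mul (Nat.cast_nonneg k), Real.sqrt_sq (hb0 k)]

set_option maxHeartbeats 2000000 in
theorem stmt_13 {H : Type*} [NormedAddCommGroup H] [InnerProductSpace ℝ H]
    [CompleteSpace H]
    (α : ℝ) (hα : α ∈ Set.Ioc (0 : ℝ) (1/2))
    (T : H → H) (hT : AveragedNE α T)
    (hfix : ∃ z, T z = z)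
    (t : ℝ) (ht : t ∈ Set.Ioo (0 : ℝ) 1)
    (x : ℕ → H) (θ : ℕ → ℝ)
    (hTx : ∀ k, T (x k) ≠ x k)
    (hθ : ∀ k, θ k = -⟪T (x k) - x k, T (x k) - T (T (x k))⟫ / ‖T (x k) - x k‖ ^ 2)
    (hrec : ∀ k, x (k + 1) =
      (1 - t) • T (T (x k)) + t • (T (x k) + θ k • (T (x k) - x k)))
    (hsum : Summable (fun k => |θ (k + 1) - θ k|)) :
    Tendsto (fun k : ℕ => Real.sqrt k * ‖x (k + 1) - x k‖) atTop (nhds 0) := by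
  obtain ⟨N, hN, hTN⟩ := hT
  obtain ⟨z, hz⟩ := hfix
  obtain ⟨hα0, hα2⟩ := hα
  obtain ⟨ht0, ht1⟩ := ht
  -- N z = z
  have hNz : N z = z := by
    have h1 : (1 - α) • z + α • N z = z := (hTN z).symm.trans hz
    have h2 : α • N z = α • z := by
      have h3 : α • N z = z - (1 - α) • z := eq_sub_of_add_eq' h1
      rw [h3]; module
    exact smul_right_injective H (ne_of_gt hα0) h2
  -- T nonexpansive
  have hTne : ∀ u v : H, ‖T u - T v‖ ≤ ‖u - v‖ := by
    intro u v
    have h1 : T u - T v = (1 - α) • (u - v) + α • (N u - N v) := by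
      rw [hTN u, hTN v]; module
    calc ‖T u - T v‖ ≤ ‖(1 - α) • (u - v)‖ + ‖α • (N u - N v)‖ := by
          rw [h1]; exact norm_add_le _ _
      _ = (1 - α) * ‖u - v‖ + α * ‖N u - N v‖ := by
          rw [norm_smul, norm_smul, Real.norm_eq_abs, Real.norm_eq_abs,
            abs_of_nonneg (by linarith), abs_of_nonneg hα0.le]
      _ ≤ (1 - α) * ‖u - v‖ + α * ‖u - v‖ := by
          have := hN u v
          nlinarith
      _ = ‖u - v‖ := by ring
  have hen : ∀ k, (0:ℝ) < ‖T (x k) - x k‖ :=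
    fun k => norm_pos_iff.2 (sub_ne_zero.2 (hTx k))
  have hθ' : ∀ k, θ k = ⟪T (x k) - x k, T (T (x k)) - T (x k)⟫ / ‖T (x k) - x k‖ ^ 2 := by
    intro k
    rw [hθ k, ← neg_sub (T (T (x k))) (T (x k)), inner_neg_right, neg_neg]
  -- inner product lower bound
  have hinner : ∀ k, ‖T (T (x k)) - T (x k)‖ ^ 2
      ≤ ⟪T (x k) - x k, T (T (x k)) - T (x k)⟫ := by
    intro k
    have h := key_ineq α α α 0 (T (x k) - x k) (N (T (x k)) - N (x k)) 0
      (T (T (x k)) - T (x k)) hα0.le le_rfl (by ring) hα0 le_rfl (by linarith)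
      (hN _ _) (by simp) (by rw [hTN (T (x k)), hTN (x k)]; module)
    have hr : (1:ℝ) ≤ (1 - α) / α := by
      rw [le_div_iff₀ hα0]; linarith
    have hns := norm_sub_sq_real (T (T (x k)) - T (x k)) (T (x k) - x k)
    have hcm : ⟪T (T (x k)) - T (x k), T (x k) - x k⟫
        = ⟪T (x k) - x k, T (T (x k)) - T (x k)⟫ := real_inner_comm _ _
    nlinarith [sq_nonneg ‖T (T (x k)) - T (x k) - (T (x k) - x k)‖,
      mul_le_mul_of_nonneg_right hr (sq_nonneg ‖T (T (x k)) - T (x k) - (T (x k) - x k)‖)]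
  have hgle : ∀ k, ‖T (T (x k)) - T (x k)‖ ≤ ‖T (x k) - x k‖ := by
    intro k
    have := hTne (T (x k)) (x k)
    exact this
  have hθ0 : ∀ k, 0 ≤ θ k := by
    intro k
    rw [hθ' k]
    exact div_nonneg (le_trans (sq_nonneg _) (hinner k)) (sq_nonneg _)
  have hθ1 : ∀ k, θ k ≤ 1 := by
    intro k
    rw [hθ' k, div_le_one (pow_pos (hen k) 2)]
    calc ⟪T (x k) - x k, T (T (x k)) - T (x k)⟫
        ≤ ‖T (x k) - x k‖ * ‖T (T (x k)) - T (x k)‖ := real_inner_le_norm _ _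
      _ ≤ ‖T (x k) - x k‖ * ‖T (x k) - x k‖ := by
          have := hgle k; nlinarith [(hen k).le]
      _ = ‖T (x k) - x k‖ ^ 2 := by ring
  -- ‖T x k − x k‖ ≤ ‖x (k+1) − x k‖
  have he_le_a : ∀ k, ‖T (x k) - x k‖ ≤ ‖x (k + 1) - x k‖ := by
    intro k
    obtain ⟨w, hw⟩ : ∃ w : H, w = T (T (x k)) - T (x k) - θ k • (T (x k) - x k) := ⟨_, rfl⟩
    have horth : ⟪T (x k) - x k, w⟫ = 0 := by
      rw [hw, inner_sub_right, real_inner_smul_right, real_inner_self_eq_norm_sq, hθ' k]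
      rw [div_mul_eq_mul_div, mul_div_assoc, div_self (pow_pos (hen k) 2).ne', mul_one,
        sub_self]
    have hxd : x (k + 1) - x k = (1 + θ k) • (T (x k) - x k) + (1 - t) • w := by
      rw [hrec k, hw]; module
    have hsq : ‖x (k + 1) - x k‖ ^ 2
        = (1 + θ k) ^ 2 * ‖T (x k) - x k‖ ^ 2 + (1 - t) ^ 2 * ‖w‖ ^ 2 := by
      rw [hxd, norm_add_sq_real, real_inner_smul_left, real_inner_smul_right, horth,
        norm_smul, norm_smul, Real.norm_eq_abs, Real.norm_eq_abs, mul_pow, mul_pow,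
        sq_abs, sq_abs]
      ring
    have h1 : ‖T (x k) - x k‖ ^ 2 ≤ ‖x (k + 1) - x k‖ ^ 2 := by
      have hθk := hθ0 k
      nlinarith [sq_nonneg ‖w‖, sq_nonneg (θ k), (hen k).le, sq_nonneg ((1-t) * ‖w‖),
        sq_nonneg ‖T (x k) - x k‖]
    nlinarith [norm_nonneg (x (k + 1) - x k), (hen k).le]
  -- constants
  obtain ⟨γs, hγs⟩ : ∃ γs : ℝ, γs = (3 + t) / 4 := ⟨_, rfl⟩
  have hγs1 : γs < 1 := by rw [hγs]; linarith
  have hγs0 : 0 < γs := by rw [hγs]; linarith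
  obtain ⟨c, hc⟩ : ∃ c : ℝ, c = (1 - γs) / γs := ⟨_, rfl⟩
  have hc0 : 0 < c := by rw [hc]; exact div_pos (by linarith) hγs0
  -- main contraction estimate
  have hG : ∀ k, ∀ u v d : H,
      d = (1 - t) • T (T u) + t • (T u + θ k • (T u - u))
        - ((1 - t) • T (T v) + t • (T v + θ k • (T v - v))) →
      ‖d‖ ^ 2 + c * ‖d - (u - v)‖ ^ 2 ≤ ‖u - v‖ ^ 2 := by
    intro k u v d hd
    have hθk0 := hθ0 k
    have hθk1 := hθ1 k
    have hq1 : (0:ℝ) ≤ (1 - t) * (1 - α) := mul_nonneg (by linarith) (by linarith)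
    have hq2 : (0:ℝ) ≤ t * (1 + θ k) := mul_nonneg ht0.le (by linarith)
    have hq3 : (0:ℝ) ≤ α * ((1 - t) * (1 - α) + t * (1 + θ k)) :=
      mul_nonneg hα0.le (by linarith)
    have hq4 : (0:ℝ) < (1 - t) * α := mul_pos (by linarith) hα0
    have h := key_ineq (α * ((1 - t) * (1 - α) + t * (1 + θ k)) + (1 - t) * α) γs
      (α * ((1 - t) * (1 - α) + t * (1 + θ k))) ((1 - t) * α)
      (u - v) (N u - N v) (N (T u) - N (T v)) d
      hq3 hq4.le (by ring)
      (by linarith)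
      (by rw [hγs]; nlinarith [mul_nonneg (mul_nonneg (by linarith : (0:ℝ) ≤ 1 - t)
          (by linarith : (0:ℝ) ≤ 1 / 2 - α)) (by linarith : (0:ℝ) ≤ 3 / 2 - α),
        mul_nonneg ht0.le (by nlinarith : (0:ℝ) ≤ 1 - α * (1 + θ k))])
      hγs1 (hN u v) (le_trans (hN (T u) (T v)) (hTne u v))
      (by rw [hd, hTN (T u), hTN (T v), hTN u, hTN v]; module)
    rw [hc]
    exact h
  -- Fejer monotonicity
  have hfejer : ∀ k, ‖x (k + 1) - z‖ ^ 2 + c * ‖x (k + 1) - x k‖ ^ 2 ≤ ‖x k - z‖ ^ 2 := by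
    intro k
    have hGz : (1 - t) • T (T z) + t • (T z + θ k • (T z - z)) = z := by
      rw [hz, hz, sub_self, smul_zero, add_zero]; module
    have h := hG k (x k) z (x (k + 1) - z) (by rw [hrec k, hGz])
    have he : x (k + 1) - z - (x k - z) = x (k + 1) - x k := by abel
    rw [he] at h
    exact h
  -- approximate monotonicity of steps
  have hstep : ∀ k, ‖x (k + 2) - x (k + 1)‖
      ≤ (1 + t * |θ (k + 1) - θ k|) * ‖x (k + 1) - x k‖ := by
    intro k
    obtain ⟨p, hp⟩ : ∃ p : H,
        p = (1 - t) • T (T (x k)) + t • (T (x k) + θ (k + 1) • (T (x k) - x k)) := ⟨_, rfl⟩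
    have hpx : p - x (k + 1) = (t * (θ (k + 1) - θ k)) • (T (x k) - x k) := by
      rw [hp, hrec k]; module
    have h2 := hG (k + 1) (x (k + 1)) (x k) (x (k + 2) - p) (by rw [hrec (k + 1), hp])
    have h2' : ‖x (k + 2) - p‖ ≤ ‖x (k + 1) - x k‖ := by
      nlinarith [mul_nonneg hc0.le (sq_nonneg ‖x (k + 2) - p - (x (k + 1) - x k)‖),
        norm_nonneg (x (k + 2) - p), norm_nonneg (x (k + 1) - x k)]
    have hpn : ‖p - x (k + 1)‖ ≤ t * |θ (k + 1) - θ k| * ‖x (k + 1) - x k‖ := by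
      rw [hpx, norm_smul, Real.norm_eq_abs, abs_mul, abs_of_nonneg ht0.le]
      exact mul_le_mul_of_nonneg_left (he_le_a k) (by positivity)
    calc ‖x (k + 2) - x (k + 1)‖ = ‖(x (k + 2) - p) + (p - x (k + 1))‖ := by
          rw [sub_add_sub_cancel]
      _ ≤ ‖x (k + 2) - p‖ + ‖p - x (k + 1)‖ := norm_add_le _ _
      _ ≤ ‖x (k + 1) - x k‖ + t * |θ (k + 1) - θ k| * ‖x (k + 1) - x k‖ := by
          exact add_le_add h2' hpn
      _ = (1 + t * |θ (k + 1) - θ k|) * ‖x (k + 1) - x k‖ := by ring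
  -- summability of squared steps
  have htel : ∀ n, ‖x n - z‖ ^ 2 + c * ∑ i ∈ Finset.range n, ‖x (i + 1) - x i‖ ^ 2
      ≤ ‖x 0 - z‖ ^ 2 := by
    intro n
    induction n with
    | zero => simp
    | succ n ih =>
      rw [Finset.sum_range_succ, mul_add]
      have := hfejer n
      linarith
  have hsumsq : Summable (fun k => ‖x (k + 1) - x k‖ ^ 2) := by
    apply summable_of_sum_range_le (c := ‖x 0 - z‖ ^ 2 / c) (fun n => sq_nonneg _)
    intro n
    rw [le_div_iff₀ hc0]
    have := htel n
    nlinarith [sq_nonneg ‖x n - z‖]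
  -- bounded products
  obtain ⟨ε, hε⟩ : ∃ ε : ℕ → ℝ, ε = fun k => t * |θ (k + 1) - θ k| := ⟨_, rfl⟩
  have hε0 : ∀ k, 0 ≤ ε k := fun k => by rw [hε]; positivity
  obtain ⟨P, hP⟩ : ∃ P : ℕ → ℝ, P = fun k => ∏ j ∈ Finset.range k, (1 + ε j) := ⟨_, rfl⟩
  have hP1 : ∀ k, 1 ≤ P k := by
    intro k; rw [hP]
    show (1:ℝ) ≤ ∏ j ∈ Finset.range k, (1 + ε j)
    calc (1:ℝ) = ∏ _j ∈ Finset.range k, (1:ℝ) := by simp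
      _ ≤ ∏ j ∈ Finset.range k, (1 + ε j) :=
          Finset.prod_le_prod (fun j _ => zero_le_one) (fun j _ => by linarith [hε0 j])
  have hP0 : ∀ k, 0 < P k := fun k => lt_of_lt_of_le one_pos (hP1 k)
  obtain ⟨C, hC⟩ : ∃ C : ℝ, C = Real.exp (t * ∑' j, |θ (j + 1) - θ j|) := ⟨_, rfl⟩
  have hPC : ∀ k, P k ≤ C := by
    intro k
    rw [hP, hC]
    calc ∏ j ∈ Finset.range k, (1 + ε j) ≤ ∏ j ∈ Finset.range k, Real.exp (ε j) :=
        Finset.prod_le_prod (fun j _ => by linarith [hε0 j])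
          (fun j _ => by rw [add_comm]; exact Real.add_one_le_exp (ε j))
      _ = Real.exp (∑ j ∈ Finset.range k, ε j) := (Real.exp_sum _ _).symm
      _ ≤ Real.exp (t * ∑' j, |θ (j + 1) - θ j|) := by
          apply Real.exp_le_exp.2
          rw [hε]
          calc ∑ j ∈ Finset.range k, t * |θ (j + 1) - θ j|
              = t * ∑ j ∈ Finset.range k, |θ (j + 1) - θ j| := by rw [Finset.mul_sum]
            _ ≤ t * ∑' j, |θ (j + 1) - θ j| :=
                mul_le_mul_of_nonneg_left
                  (Summable.sum_le_tsum _ (fun i _ => abs_nonneg _) hsum) ht0.le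
  -- normalized step sizes
  obtain ⟨b, hb⟩ : ∃ b : ℕ → ℝ, b = fun k => ‖x (k + 1) - x k‖ / P k := ⟨_, rfl⟩
  have hb0 : ∀ k, 0 ≤ b k := fun k => by
    rw [hb]; exact div_nonneg (norm_nonneg _) (hP0 k).le
  have hbmono : ∀ k, b (k + 1) ≤ b k := by
    intro k
    rw [hb]
    show ‖x (k + 1 + 1) - x (k + 1)‖ / P (k + 1) ≤ ‖x (k + 1) - x k‖ / P k
    have hPs : P (k + 1) = P k * (1 + ε k) := by rw [hP]; exact Finset.prod_range_succ _ _
    rw [div_le_div_iff₀ (hP0 (k + 1)) (hP0 k), hPs]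
    have h1 : ‖x (k + 1 + 1) - x (k + 1)‖ ≤ (1 + ε k) * ‖x (k + 1) - x k‖ := by
      rw [hε]; exact hstep k
    calc ‖x (k + 1 + 1) - x (k + 1)‖ * P k ≤ ((1 + ε k) * ‖x (k + 1) - x k‖) * P k :=
          mul_le_mul_of_nonneg_right h1 (hP0 k).le
      _ = ‖x (k + 1) - x k‖ * (P k * (1 + ε k)) := by ring
  have hbsum : Summable (fun k => b k ^ 2) := by
    apply Summable.of_nonneg_of_le (fun k => sq_nonneg _) _ hsumsq
    intro k
    rw [hb]
    have h1 : ‖x (k + 1) - x k‖ / P k ≤ ‖x (k + 1) - x k‖ :=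
      div_le_self (norm_nonneg _) (hP1 k)
    exact pow_le_pow_left₀ (div_nonneg (norm_nonneg _) (hP0 k).le) h1 2
  have hdecay := sq_decay hb0 hbmono hbsum
  have hfin := hdecay.const_mul C
  rw [mul_zero] at hfin
  apply squeeze_zero (fun k => mul_nonneg (Real.sqrt_nonneg _) (norm_nonneg _)) _ hfin
  intro k
  have h1 : ‖x (k + 1) - x k‖ ≤ C * b k := by
    have h2 : ‖x (k + 1) - x k‖ = P k * b k := by
      rw [hb]
      show ‖x (k + 1) - x k‖ = P k * (‖x (k + 1) - x k‖ / P k)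
      rw [mul_comm, div_mul_cancel₀ _ (hP0 k).ne']
    rw [h2]
    exact mul_le_mul_of_nonneg_right (hPC k) (hb0 k)
  calc Real.sqrt k * ‖x (k + 1) - x k‖ ≤ Real.sqrt k * (C * b k) :=
        mul_le_mul_of_nonneg_left h1 (Real.sqrt_nonneg _)
    _ = C * (Real.sqrt k * b k) := by ring
end

section
/- Let H be a real Hilbert space, α ∈ (0, 1/2], and T : H → H an α-averaged nonexpansive operator. For any x ∈ H with Tx ≠ x, define θ := −⟨Tx − x, Tx − T²x⟩ / ‖Tx − x‖². Then ‖Tx − T²x‖² − 2(1−α)θ‖x − Tx‖² ≤ (2α − 1)‖x − Tx‖². -/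
open RealInnerProductSpace Filter Topology

theorem stmt_16 {H : Type*} [NormedAddCommGroup H] [InnerProductSpace ℝ H]
    [CompleteSpace H]
    (α : ℝ) (hα : α ∈ Set.Ioc (0 : ℝ) (1/2))
    (T : H → H) (hT : AveragedNE α T)
    (x : H) (hx : T x ≠ x)
    (θ : ℝ) (hθ : θ = -⟪T x - x, T x - T (T x)⟫ / ‖T x - x‖ ^ 2) :
    ‖T x - T (T x)‖ ^ 2 - 2 * (1 - α) * θ * ‖x - T x‖ ^ 2 ≤
      (2 * α - 1) * ‖x - T x‖ ^ 2 := by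
  obtain ⟨N, hN, hTN⟩ := hT
  obtain ⟨hα0, hα1⟩ := hα
  set a : H := x - T x with ha
  set b : H := T x - T (T x) with hb
  have hab : b - (1 - α) • a = α • (N x - N (T x)) := by
    simp only [ha, hb, hTN, smul_sub]
    abel
  have hkey : ‖b - (1 - α) • a‖ ≤ α * ‖a‖ := by
    rw [hab, norm_smul, Real.norm_eq_abs, abs_of_pos hα0]
    exact mul_le_mul_of_nonneg_left (hN x (T x)) hα0.le
  have hsq : ‖b - (1 - α) • a‖ ^ 2 ≤ α ^ 2 * ‖a‖ ^ 2 := by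
    have := mul_self_le_mul_self (norm_nonneg _) hkey
    nlinarith [norm_nonneg (b - (1 - α) • a), norm_nonneg a]
  have hexp : ‖b - (1 - α) • a‖ ^ 2
      = ‖b‖ ^ 2 - 2 * (1 - α) * ⟪a, b⟫ + (1 - α) ^ 2 * ‖a‖ ^ 2 := by
    rw [@norm_sub_sq_real, inner_smul_right, norm_smul, Real.norm_eq_abs]
    rw [real_inner_comm, abs_of_nonneg (by linarith : (0:ℝ) ≤ 1 - α)]
    ring
  have hne : ‖T x - x‖ ^ 2 ≠ 0 := by
    have : T x - x ≠ 0 := sub_ne_zero.mpr hx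
    exact pow_ne_zero 2 (norm_ne_zero_iff.mpr this)
  have hθa : θ * ‖x - T x‖ ^ 2 = ⟪a, b⟫ := by
    have h1 : ‖x - T x‖ = ‖T x - x‖ := norm_sub_rev _ _
    have h2 : (⟪T x - x, b⟫ : ℝ) = -⟪a, b⟫ := by
      rw [ha, ← inner_neg_left, neg_sub]
    rw [hθ, h1, h2, neg_neg, div_mul_cancel₀ _ hne]
  nlinarith [hsq, hexp, hθa]
end

section
/- Let H be a real Hilbert space, α ∈ (0, 1/2], T : H → H an α-averaged nonexpansive operator, and t ∈ (0,1). Let x ∈ H with Tx ≠ x, set θ := −⟨Tx − x, Tx − T²x⟩ / ‖Tx − x‖², T^θ := T + θ(T − I), and x⁺ := (1−t)T²x + t T^θ x. Then ‖x⁺ − x‖² = (1−t)²‖T²x − T^θ x‖² + ‖T^θ x − x‖², and consequently ‖x⁺ − T^θ x‖ ≤ ‖x⁺ − x‖. -/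
open RealInnerProductSpace Filter Topology

theorem stmt_17 {H : Type*} [NormedAddCommGroup H] [InnerProductSpace ℝ H]
    [CompleteSpace H]
    (α : ℝ) (hα : α ∈ Set.Ioc (0 : ℝ) (1/2))
    (T : H → H) (hT : AveragedNE α T)
    (t : ℝ) (ht : t ∈ Set.Ioo (0 : ℝ) 1)
    (x : H) (hx : T x ≠ x)
    (θ : ℝ) (hθ : θ = -⟪T x - x, T x - T (T x)⟫ / ‖T x - x‖ ^ 2)
    (xp : H) (hxp : xp = (1 - t) • T (T x) + t • (T x + θ • (T x - x))) :
    ‖xp - x‖ ^ 2 =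
      (1 - t) ^ 2 * ‖T (T x) - (T x + θ • (T x - x))‖ ^ 2 +
        ‖(T x + θ • (T x - x)) - x‖ ^ 2 ∧
    ‖xp - (T x + θ • (T x - x))‖ ≤ ‖xp - x‖ := by
  have hd : T x - x ≠ 0 := sub_ne_zero.mpr hx
  have hn : ‖T x - x‖ ^ 2 ≠ 0 := pow_ne_zero _ (norm_ne_zero_iff.mpr hd)
  have hθ' : θ * ‖T x - x‖ ^ 2 = ⟪T x - x, T (T x) - T x⟫ := by
    rw [hθ, div_mul_cancel₀ _ hn]
    rw [show T x - T (T x) = -(T (T x) - T x) by abel, inner_neg_right]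
    ring
  set A := T (T x) - (T x + θ • (T x - x)) with hA
  set B := (T x + θ • (T x - x)) - x with hB
  have key : ⟪A, B⟫ = 0 := by
    have h1 : B = (1 + θ) • (T x - x) := by rw [hB]; module
    have h2 : A = (T (T x) - T x) - θ • (T x - x) := by rw [hA]; abel
    rw [h1, h2, real_inner_smul_right, inner_sub_left, real_inner_smul_left,
      real_inner_self_eq_norm_sq, real_inner_comm, ← hθ']
    ring
  have hsplit : xp - x = (1 - t) • A + B := by
    rw [hxp, hA, hB]; module
  have heq : ‖xp - x‖ ^ 2 = (1 - t) ^ 2 * ‖A‖ ^ 2 + ‖B‖ ^ 2 := by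
    rw [hsplit, norm_add_sq_real, real_inner_smul_left, key, norm_smul,
      mul_pow, Real.norm_eq_abs, sq_abs]
    ring
  refine ⟨heq, ?_⟩
  have h3 : xp - (T x + θ • (T x - x)) = (1 - t) • A := by
    rw [hxp, hA]; module
  have h4 : ‖xp - (T x + θ • (T x - x))‖ ^ 2 ≤ ‖xp - x‖ ^ 2 := by
    rw [h3, heq, norm_smul, mul_pow, Real.norm_eq_abs, sq_abs]
    nlinarith [sq_nonneg ‖B‖]
  exact (pow_le_pow_iff_left₀ (norm_nonneg _) (norm_nonneg _) two_ne_zero).mp h4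
end

section
/- Let H be a real Hilbert space, α ∈ (0, 1/2], T : H → H an α-averaged nonexpansive operator, and t ∈ (0,1). Let x ∈ H with Tx ≠ x, set θ := −⟨Tx − x, Tx − T²x⟩ / ‖Tx − x‖², T^θ := T + θ(T − I), and x⁺ := (1−t)T²x + t T^θ x. Then ‖x⁺ − x‖ ≤ 2‖Tx − x‖. -/
open RealInnerProductSpace Filter Topology

theorem stmt_18 {H : Type*} [NormedAddCommGroup H] [InnerProductSpace ℝ H]
    [CompleteSpace H]
    (α : ℝ) (hα : α ∈ Set.Ioc (0 : ℝ) (1/2))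
    (T : H → H) (hT : AveragedNE α T)
    (t : ℝ) (ht : t ∈ Set.Ioo (0 : ℝ) 1)
    (x : H) (hx : T x ≠ x)
    (θ : ℝ) (hθ : θ = -⟪T x - x, T x - T (T x)⟫ / ‖T x - x‖ ^ 2)
    (xp : H) (hxp : xp = (1 - t) • T (T x) + t • (T x + θ • (T x - x))) :
    ‖xp - x‖ ≤ 2 * ‖T x - x‖ := by
  obtain ⟨N, hN, hTN⟩ := hT
  obtain ⟨hα0, hα2⟩ := hα
  obtain ⟨ht0, ht1⟩ := ht
  -- T is nonexpansive
  have hTne : Nonexpansive T := by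
    intro a b
    have h1 : T a - T b = (1 - α) • (a - b) + α • (N a - N b) := by
      rw [hTN a, hTN b]; module
    calc ‖T a - T b‖ ≤ ‖(1 - α) • (a - b)‖ + ‖α • (N a - N b)‖ := by
          rw [h1]; exact norm_add_le _ _
      _ = (1 - α) * ‖a - b‖ + α * ‖N a - N b‖ := by
          rw [norm_smul, norm_smul, Real.norm_eq_abs, Real.norm_eq_abs,
            abs_of_nonneg (by linarith), abs_of_nonneg (le_of_lt hα0)]
      _ ≤ (1 - α) * ‖a - b‖ + α * ‖a - b‖ := by
          have := hN a b; nlinarith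
      _ = ‖a - b‖ := by ring
  set d := T x - x with hd
  set e := T x - T (T x) with he
  have hdpos : 0 < ‖d‖ := by
    rw [norm_pos_iff]; intro h; apply hx; rw [sub_eq_zero] at h; exact h
  have hed : ‖e‖ ≤ ‖d‖ := by
    have := hTne x (T x)
    calc ‖e‖ = ‖T x - T (T x)‖ := rfl
      _ = ‖T (T x) - T x‖ := (norm_sub_rev _ _)
      _ ≤ ‖T x - x‖ := hTne (T x) x
      _ = ‖d‖ := rfl
  have hθabs : |θ| ≤ 1 := by
    rw [hθ]
    rw [abs_div]
    rw [div_le_one (by positivity)]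
    have h1 : |(-⟪d, e⟫ : ℝ)| ≤ ‖d‖ * ‖e‖ := by
      rw [abs_neg]; exact abs_real_inner_le_norm d e
    have : |(‖d‖^2 : ℝ)| = ‖d‖^2 := abs_of_nonneg (by positivity)
    rw [this]
    nlinarith
  have hxpx : xp - x = (1 - t) • (d - e) + (t * (1 + θ)) • d := by
    rw [hxp, hd, he]; module
  calc ‖xp - x‖ ≤ ‖(1 - t) • (d - e)‖ + ‖(t * (1 + θ)) • d‖ := by
        rw [hxpx]; exact norm_add_le _ _
    _ = (1 - t) * ‖d - e‖ + (t * |1 + θ|) * ‖d‖ := by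
        rw [norm_smul, norm_smul, Real.norm_eq_abs, Real.norm_eq_abs,
          abs_of_nonneg (by linarith), abs_mul, abs_of_nonneg (le_of_lt ht0)]
    _ ≤ (1 - t) * (‖d‖ + ‖e‖) + (t * 2) * ‖d‖ := by
        have h1 : ‖d - e‖ ≤ ‖d‖ + ‖e‖ := norm_sub_le _ _
        have h2 : |1 + θ| ≤ 2 := by
          have := abs_le.mp hθabs; rw [abs_le]; constructor <;> linarith
        have hd0 : 0 ≤ ‖d‖ := norm_nonneg _
        have h3 : (0:ℝ) ≤ 1 - t := by linarith
        nlinarith [mul_le_mul_of_nonneg_left h1 h3,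
          mul_le_mul_of_nonneg_left h2 (mul_nonneg ht0.le hd0)]
    _ ≤ 2 * ‖d‖ := by nlinarith
end

section
/- Let H be a real Hilbert space, α ∈ (0, 1/2], T : H → H an α-averaged nonexpansive operator, t ∈ (0,1), and let (x^k) be a TKMA sequence for T: x^{k+1} = (1−t)T²x^k + t T^{θ_k}x^k with θ_k := −⟨Tx^k − x^k, Tx^k − T²x^k⟩ / ‖Tx^k − x^k‖² and Tx^k ≠ x^k for all k. Define d_k := 2t|θ_{k+1} − θ_k| / (1 + θ_k). Then for all k ≥ 0, ‖x^{k+2} − x^{k+1}‖ ≤ (1 + d_k)·‖x^{k+1} − x^k‖. -/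
open RealInnerProductSpace Filter Topology

theorem stmt_19 {H : Type*} [NormedAddCommGroup H] [InnerProductSpace ℝ H]
    [CompleteSpace H]
    (α : ℝ) (hα : α ∈ Set.Ioc (0 : ℝ) (1/2))
    (T : H → H) (hT : AveragedNE α T)
    (t : ℝ) (ht : t ∈ Set.Ioo (0 : ℝ) 1)
    (x : ℕ → H) (θ : ℕ → ℝ)
    (hTx : ∀ k, T (x k) ≠ x k)
    (hθ : ∀ k, θ k = -⟪T (x k) - x k, T (x k) - T (T (x k))⟫ / ‖T (x k) - x k‖ ^ 2)
    (hrec : ∀ k, x (k + 1) =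
      (1 - t) • T (T (x k)) + t • (T (x k) + θ k • (T (x k) - x k)))
    (d : ℕ → ℝ) (hd : ∀ k, d k = 2 * t * |θ (k + 1) - θ k| / (1 + θ k)) :
    ∀ k : ℕ, ‖x (k + 2) - x (k + 1)‖ ≤ (1 + d k) * ‖x (k + 1) - x k‖ := by
  obtain ⟨hα0, hα2⟩ := hα
  obtain ⟨ht0, ht1⟩ := ht
  obtain ⟨N, hN, hTN⟩ := hT
  -- T is nonexpansive
  have hTne : ∀ a b : H, ‖T a - T b‖ ≤ ‖a - b‖ := by
    intro a b
    have h1 : T a - T b = (1 - α) • (a - b) + α • (N a - N b) := by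
      rw [hTN a, hTN b]; module
    rw [h1]
    calc ‖(1 - α) • (a - b) + α • (N a - N b)‖
        ≤ ‖(1 - α) • (a - b)‖ + ‖α • (N a - N b)‖ := norm_add_le _ _
      _ = (1 - α) * ‖a - b‖ + α * ‖N a - N b‖ := by
          rw [norm_smul, norm_smul, Real.norm_eq_abs, Real.norm_eq_abs,
            abs_of_nonneg (by linarith), abs_of_nonneg hα0.le]
      _ ≤ (1 - α) * ‖a - b‖ + α * ‖a - b‖ := by nlinarith [hN a b]
      _ = ‖a - b‖ := by ring
  -- S_θ' is nonexpansive when 0 ≤ θ' and α(1+θ') ≤ 1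
  have hSne : ∀ θ' : ℝ, 0 ≤ θ' → α * (1 + θ') ≤ 1 → ∀ a b : H,
      ‖(T a + θ' • (T a - a)) - (T b + θ' • (T b - b))‖ ≤ ‖a - b‖ := by
    intro θ' hθ0 hθ1 a b
    have h1 : (T a + θ' • (T a - a)) - (T b + θ' • (T b - b))
        = (1 - α * (1 + θ')) • (a - b) + (α * (1 + θ')) • (N a - N b) := by
      rw [hTN a, hTN b]; module
    have hβ0 : 0 ≤ α * (1 + θ') := by positivity
    rw [h1]
    calc ‖(1 - α * (1 + θ')) • (a - b) + (α * (1 + θ')) • (N a - N b)‖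
        ≤ ‖(1 - α * (1 + θ')) • (a - b)‖ + ‖(α * (1 + θ')) • (N a - N b)‖ :=
          norm_add_le _ _
      _ = (1 - α * (1 + θ')) * ‖a - b‖ + (α * (1 + θ')) * ‖N a - N b‖ := by
          rw [norm_smul, norm_smul, Real.norm_eq_abs, Real.norm_eq_abs,
            abs_of_nonneg (by linarith), abs_of_nonneg hβ0]
      _ ≤ (1 - α * (1 + θ')) * ‖a - b‖ + (α * (1 + θ')) * ‖a - b‖ := by
          nlinarith [hN a b]
      _ = ‖a - b‖ := by ring
  -- key per-step facts
  have hkey : ∀ k : ℕ, 0 ≤ θ k ∧ θ k ≤ 1 ∧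
      (1 + θ k) * ‖T (x k) - x k‖ ≤ ‖x (k + 1) - x k‖ := by
    intro k
    set e : H := T (x k) - x k with he
    set f : H := T (T (x k)) - T (x k) with hf
    have hene : e ≠ 0 := sub_ne_zero.mpr (hTx k)
    have he0 : (0:ℝ) < ‖e‖ := norm_pos_iff.mpr hene
    -- ‖f - e‖ ≤ ‖e‖
    have hfe : ‖f - e‖ ≤ ‖e‖ := by
      have h1 : f - e = α • (N (T (x k)) - N (x k)) - α • (T (x k) - x k) := by
        rw [he, hf, hTN (T (x k)), hTN (x k)]; module
      have h2 : ‖f - e‖ ≤ α * ‖N (T (x k)) - N (x k)‖ + α * ‖T (x k) - x k‖ := by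
        rw [h1]
        calc ‖α • (N (T (x k)) - N (x k)) - α • (T (x k) - x k)‖
            ≤ ‖α • (N (T (x k)) - N (x k))‖ + ‖α • (T (x k) - x k)‖ :=
              norm_sub_le _ _
          _ = α * ‖N (T (x k)) - N (x k)‖ + α * ‖T (x k) - x k‖ := by
              rw [norm_smul, norm_smul, Real.norm_eq_abs, abs_of_nonneg hα0.le]
      have h3 : ‖N (T (x k)) - N (x k)‖ ≤ ‖T (x k) - x k‖ := hN _ _
      have : ‖T (x k) - x k‖ = ‖e‖ := by rw [he]
      nlinarith
    have hfle : ‖f‖ ≤ ‖e‖ := by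
      have := hTne (T (x k)) (x k)
      rw [← he, ← hf] at this; exact this
    -- inner product nonneg and bounded
    have hef : 0 ≤ ⟪e, f⟫ := by
      have h1 : ‖e - f‖ ^ 2 = ‖e‖ ^ 2 - 2 * ⟪e, f⟫ + ‖f‖ ^ 2 :=
        norm_sub_sq_real e f
      have h2 : ‖e - f‖ = ‖f - e‖ := norm_sub_rev e f
      nlinarith [sq_nonneg ‖f‖, mul_self_le_mul_self (norm_nonneg (f - e)) hfe,
        sq_abs ‖f - e‖]
    have hefle : ⟪e, f⟫ ≤ ‖e‖ ^ 2 := by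
      have := real_inner_le_norm e f
      nlinarith
    -- θ k * ‖e‖² = ⟪e, f⟫
    have hθk : θ k * ‖e‖ ^ 2 = ⟪e, f⟫ := by
      have h1 : T (x k) - T (T (x k)) = -f := by rw [hf]; abel
      have h2 : -⟪e, T (x k) - T (T (x k))⟫ = ⟪e, f⟫ := by
        rw [h1, inner_neg_right]; ring
      rw [hθ k, ← he, h2]
      field_simp
    have hθ0 : 0 ≤ θ k := by
      have h2 : (0:ℝ) < ‖e‖ ^ 2 := by positivity
      nlinarith
    have hθ1 : θ k ≤ 1 := by
      have h2 : (0:ℝ) < ‖e‖ ^ 2 := by positivity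
      nlinarith
    refine ⟨hθ0, hθ1, ?_⟩
    -- key inner product identity
    have hΔ : x (k + 1) - x k = (1 + t * θ k) • e + (1 - t) • f := by
      rw [hrec k, he, hf]; module
    have hinner : ⟪x (k + 1) - x k, e⟫ = (1 + θ k) * ‖e‖ ^ 2 := by
      rw [hΔ, inner_add_left, real_inner_smul_left, real_inner_smul_left,
        real_inner_self_eq_norm_sq]
      have hθk' : (⟪f, e⟫ : ℝ) = θ k * ‖e‖ ^ 2 := by
        rw [real_inner_comm]; exact hθk.symm
      linear_combination (1 - t) * hθk'
    have hCS : ⟪x (k + 1) - x k, e⟫ ≤ ‖x (k + 1) - x k‖ * ‖e‖ :=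
      real_inner_le_norm _ _
    rw [hinner] at hCS
    nlinarith [hCS, he0]
  -- main estimate
  intro k
  obtain ⟨hθk0, hθk1, hlow⟩ := hkey k
  obtain ⟨hθk10, hθk11, _⟩ := hkey (k + 1)
  set e : H := T (x k) - x k with he
  set Δ : ℝ := ‖x (k + 1) - x k‖ with hΔ
  have hΔ0 : 0 ≤ Δ := norm_nonneg _
  have h2 : x (k + 2) = (1 - t) • T (T (x (k + 1)))
      + t • (T (x (k + 1)) + θ (k + 1) • (T (x (k + 1)) - x (k + 1))) := hrec (k + 1)
  have hsplit : x (k + 2) - x (k + 1) =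
      ((1 - t) • (T (T (x (k + 1))) - T (T (x k)))
      + t • ((T (x (k + 1)) + θ (k + 1) • (T (x (k + 1)) - x (k + 1)))
          - (T (x k) + θ (k + 1) • (T (x k) - x k))))
      + (t * (θ (k + 1) - θ k)) • (T (x k) - x k) := by
    rw [h2, hrec k]; module
  have hA : ‖T (T (x (k + 1))) - T (T (x k))‖ ≤ Δ :=
    le_trans (hTne _ _) (hTne _ _)
  have hB : ‖(T (x (k + 1)) + θ (k + 1) • (T (x (k + 1)) - x (k + 1)))
      - (T (x k) + θ (k + 1) • (T (x k) - x k))‖ ≤ Δ := by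
    apply hSne (θ (k + 1)) hθk10 (by nlinarith)
  have hnorm : ‖x (k + 2) - x (k + 1)‖ ≤
      (1 - t) * Δ + t * Δ + (t * |θ (k + 1) - θ k|) * ‖e‖ := by
    rw [hsplit]
    calc ‖((1 - t) • (T (T (x (k + 1))) - T (T (x k)))
        + t • ((T (x (k + 1)) + θ (k + 1) • (T (x (k + 1)) - x (k + 1)))
            - (T (x k) + θ (k + 1) • (T (x k) - x k))))
        + (t * (θ (k + 1) - θ k)) • (T (x k) - x k)‖
        ≤ ‖(1 - t) • (T (T (x (k + 1))) - T (T (x k)))‖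
          + ‖t • ((T (x (k + 1)) + θ (k + 1) • (T (x (k + 1)) - x (k + 1)))
              - (T (x k) + θ (k + 1) • (T (x k) - x k)))‖
          + ‖(t * (θ (k + 1) - θ k)) • (T (x k) - x k)‖ := norm_add₃_le
      _ ≤ (1 - t) * Δ + t * Δ + (t * |θ (k + 1) - θ k|) * ‖e‖ := by
          rw [norm_smul, norm_smul, norm_smul, Real.norm_eq_abs, Real.norm_eq_abs,
            Real.norm_eq_abs, abs_of_nonneg (by linarith : (0:ℝ) ≤ 1 - t),
            abs_of_nonneg ht0.le, abs_mul, abs_of_nonneg ht0.le, ← he]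
          have hA' := mul_le_mul_of_nonneg_left hA (by linarith : (0:ℝ) ≤ 1 - t)
          have hB' := mul_le_mul_of_nonneg_left hB ht0.le
          linarith
  -- from hlow : (1 + θ k) * ‖e‖ ≤ Δ with 1 + θ k ≥ 1 > 0
  have hdk : d k = 2 * t * |θ (k + 1) - θ k| / (1 + θ k) := hd k
  have h1θ : (0:ℝ) < 1 + θ k := by linarith
  have habs : (0:ℝ) ≤ |θ (k + 1) - θ k| := abs_nonneg _
  have hkey2 : (t * |θ (k + 1) - θ k|) * ‖e‖ ≤ d k * Δ := by
    rw [hdk]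
    rw [div_mul_eq_mul_div, le_div_iff₀ h1θ]
    have he0 : (0:ℝ) ≤ ‖e‖ := norm_nonneg _
    have h5 : t * |θ (k + 1) - θ k| * ((1 + θ k) * ‖e‖) ≤ t * |θ (k + 1) - θ k| * Δ :=
      mul_le_mul_of_nonneg_left hlow (by positivity)
    nlinarith [mul_nonneg (mul_nonneg ht0.le habs) hΔ0, h5]
  calc ‖x (k + 2) - x (k + 1)‖ ≤ (1 - t) * Δ + t * Δ + (t * |θ (k + 1) - θ k|) * ‖e‖ :=
        hnorm
    _ ≤ (1 - t) * Δ + t * Δ + d k * Δ := by linarith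
    _ = (1 + d k) * Δ := by ring
end
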